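/- arXiv:1607.06021 — 7 statements merged into one kernel-verified Lean document; each statement's English description precedes it below -/
import Mathlib

section
/- For every feasible schedule S of the shared multi-processor instance there exists a feasible schedule S' that is normal and satisfies Ω(S') = Ω(S). Consequently, if an optimal feasible schedule exists, then there exists an optimal feasible schedule that is normal. -/
/-- A feasible schedule for a shared multi-processor instance: jobs `J` with
processing times `p`, `m` shared processors.  Each job `j` gets a shared
processor `mu j`, a finite set `iv j` of pairwise disjoint open bounded
subintervals of `(0,∞)` (represented by their endpoint pairs) on which `j`
executes on processor `mu j`, and a private completion time `c j ≥ 0` so that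
`j` executes on its private processor exactly in `(0, c j)`.  The private time
plus the total length of the shared intervals equals `p j`, and intervals of
distinct jobs on a common shared processor are disjoint. -/
structure Schedule (J : Type) [Fintype J] [DecidableEq J] (m : ℕ) (p : J → ℝ) where
  mu : J → Fin m
  iv : J → Finset (ℝ × ℝ)
  c : J → ℝ
  c_nonneg : ∀ j, 0 ≤ c j
  iv_valid : ∀ j, ∀ q ∈ iv j, 0 ≤ q.1 ∧ q.1 ≤ q.2
  iv_disjoint : ∀ j, ∀ q ∈ iv j, ∀ q' ∈ iv j, q ≠ q' → q.2 ≤ q'.1 ∨ q'.2 ≤ q.1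
  total : ∀ j, c j + ∑ q ∈ iv j, (q.2 - q.1) = p j
  shared_disjoint : ∀ j j', j ≠ j' → mu j = mu j' →
    ∀ q ∈ iv j, ∀ q' ∈ iv j', q.2 ≤ q'.1 ∨ q'.2 ≤ q.1

namespace Schedule

variable {J : Type} [Fintype J] [DecidableEq J] {m : ℕ} {p : J → ℝ}

/-- The overlap `t_j` of job `j`: total length of `(0, c j) ∩ ⋃ (iv j)`. -/
noncomputable def overlap (S : Schedule J m p) (j : J) : ℝ :=
  ∑ q ∈ S.iv j, max 0 (min (S.c j) q.2 - q.1)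

/-- Total weighted overlap `Ω(S) = Σ_j w_j t_j`. -/
noncomputable def Omega (S : Schedule J m p) (w : J → ℝ) : ℝ :=
  ∑ j, w j * S.overlap j

/-- Completion time of `j` on its shared processor: the supremum of right
endpoints of its shared intervals, `0` if there are none. -/
noncomputable def ftime (S : Schedule J m p) (j : J) : ℝ :=
  WithBot.unbotD 0 (((S.iv j).image Prod.snd).max)

/-- A schedule is normal if every job completes on the shared processor no
later than on its private processor. -/
def Normal (S : Schedule J m p) : Prop := ∀ j, S.ftime j ≤ S.c j

/-- A schedule is optimal if it maximizes the total weighted overlap. -/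
def Optimal (S : Schedule J m p) (w : J → ℝ) : Prop :=
  ∀ S' : Schedule J m p, S'.Omega w ≤ S.Omega w

end Schedule

/-!
Cut every shared interval of a job `j` at its private completion time `c j`, dropping what lies
beyond, and give the removed shared processing time to the private processor instead. The job
now finishes on the shared processor by the old `c j`, hence by the new, larger one. The overlap
is unchanged, because only shared time after the old `c j` was removed and the kept parts lie
entirely below both completion times. Intervals only shrink, so all disjointness constraints
survive.
-/

namespace Schedule

noncomputable def truncIntervals (c : ℝ) (s : Finset (ℝ × ℝ)) : Finset (ℝ × ℝ) :=
  (s.filter fun q => q.1 < min c q.2).image fun q => (q.1, min c q.2)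

section truncIntervals

variable {c : ℝ} {s : Finset (ℝ × ℝ)}

theorem forall_mem_truncIntervals {P : ℝ × ℝ → Prop} :
    (∀ q ∈ truncIntervals c s, P q) ↔ ∀ q ∈ s, q.1 < min c q.2 → P (q.1, min c q.2) := by
  simp only [truncIntervals, Finset.forall_mem_image, Finset.mem_filter, and_imp]

theorem truncate_separated {c' : ℝ} {q q' : ℝ × ℝ} (h : q.2 ≤ q'.1 ∨ q'.2 ≤ q.1) :
    min c q.2 ≤ q'.1 ∨ min c' q'.2 ≤ q.1 :=
  h.imp (min_le_right c q.2).trans (min_le_right c' q'.2).trans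

theorem injOn_truncate
    (hs : ∀ q ∈ s, ∀ q' ∈ s, q ≠ q' → q.2 ≤ q'.1 ∨ q'.2 ≤ q.1) :
    Set.InjOn (fun q : ℝ × ℝ => (q.1, min c q.2)) (s.filter fun q => q.1 < min c q.2) := by
  intro q hq q' hq' heq
  simp only [Finset.coe_filter, Set.mem_ofPred_eq] at hq hq'
  have hl : q.1 = q'.1 := (Prod.ext_iff.mp heq).1
  by_contra hne
  rcases hs q hq.1 q' hq'.1 hne with h | h
  · linarith [hq.2, min_le_right c q.2]
  · linarith [hq'.2, min_le_right c q'.2]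

theorem sum_length_truncIntervals
    (hs : ∀ q ∈ s, ∀ q' ∈ s, q ≠ q' → q.2 ≤ q'.1 ∨ q'.2 ≤ q.1) :
    ∑ q ∈ truncIntervals c s, (q.2 - q.1) = ∑ q ∈ s, max 0 (min c q.2 - q.1) := by
  rw [truncIntervals, Finset.sum_image (injOn_truncate hs), Finset.sum_filter]
  refine Finset.sum_congr rfl fun q _ => ?_
  split_ifs with h
  · exact (max_eq_right (sub_nonneg.mpr h.le)).symm
  · exact (max_eq_left (sub_nonpos.mpr (not_lt.mp h))).symm

theorem sum_overlap_truncIntervals_of_le {c' : ℝ} (hc : c ≤ c') :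
    ∑ q ∈ truncIntervals c s, max 0 (min c' q.2 - q.1) =
      ∑ q ∈ truncIntervals c s, (q.2 - q.1) := by
  refine Finset.sum_congr rfl ?_
  rw [forall_mem_truncIntervals]
  intro q _ hq
  have hle : min c q.2 ≤ c' := (min_le_left c q.2).trans hc
  simp only [min_eq_right hle]
  exact max_eq_right (sub_nonneg.mpr hq.le)

end truncIntervals

variable {J : Type} [Fintype J] [DecidableEq J] {m : ℕ} {p : J → ℝ}

theorem overlap_le_sum_length (S : Schedule J m p) (j : J) :
    S.overlap j ≤ ∑ q ∈ S.iv j, (q.2 - q.1) :=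
  Finset.sum_le_sum fun q hq =>
    max_le (sub_nonneg.mpr (S.iv_valid j q hq).2) (by linarith [min_le_right (S.c j) q.2])

theorem c_le_sub_overlap (S : Schedule J m p) (j : J) : S.c j ≤ p j - S.overlap j := by
  linarith [S.total j, S.overlap_le_sum_length j]

theorem ftime_le_of_forall_le {S : Schedule J m p} {j : J} {b : ℝ} (hb : 0 ≤ b)
    (h : ∀ q ∈ S.iv j, q.2 ≤ b) : S.ftime j ≤ b := by
  rw [ftime, WithBot.unbotD_le_iff fun _ => hb]
  exact Finset.max_le <| Finset.forall_mem_image.mpr fun q hq => WithBot.coe_le_coe.mpr (h q hq)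

noncomputable def normalize (S : Schedule J m p) : Schedule J m p where
  mu := S.mu
  iv j := truncIntervals (S.c j) (S.iv j)
  c j := p j - S.overlap j
  c_nonneg j := (S.c_nonneg j).trans (S.c_le_sub_overlap j)
  iv_valid j := forall_mem_truncIntervals.mpr fun q hq hlt =>
    ⟨(S.iv_valid j q hq).1, hlt.le⟩
  iv_disjoint j := forall_mem_truncIntervals.mpr fun q hq _ =>
    forall_mem_truncIntervals.mpr fun q' hq' _ hne =>
      truncate_separated (S.iv_disjoint j q hq q' hq' fun h => hne (h ▸ rfl))
  total j := by
    rw [sum_length_truncIntervals (S.iv_disjoint j), ← overlap]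
    ring
  shared_disjoint j j' hjj' hmu := forall_mem_truncIntervals.mpr fun q hq _ =>
    forall_mem_truncIntervals.mpr fun q' hq' _ =>
      truncate_separated (S.shared_disjoint j j' hjj' hmu q hq q' hq')

theorem normalize_normal (S : Schedule J m p) : S.normalize.Normal := fun j =>
  ftime_le_of_forall_le ((S.c_nonneg j).trans (S.c_le_sub_overlap j)) <|
    forall_mem_truncIntervals.mpr fun _ _ _ =>
      (min_le_left _ _).trans (S.c_le_sub_overlap j)

theorem overlap_normalize (S : Schedule J m p) (j : J) : S.normalize.overlap j = S.overlap j :=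
  (sum_overlap_truncIntervals_of_le (S.c_le_sub_overlap j)).trans
    (sum_length_truncIntervals (S.iv_disjoint j))

theorem Omega_normalize (S : Schedule J m p) (w : J → ℝ) : S.normalize.Omega w = S.Omega w := by
  simp only [Omega, overlap_normalize]

theorem Optimal.normalize {S : Schedule J m p} {w : J → ℝ} (hS : S.Optimal w) :
    S.normalize.Optimal w := fun S' => (S.Omega_normalize w).symm ▸ hS S'

end Schedule

theorem exists_normal_with_same_overlap_and_exists_optimal_normal_general
    {J : Type} [Fintype J] [DecidableEq J] {m : ℕ}
    (p w : J → ℝ) :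
    (∀ S : Schedule J m p, ∃ S' : Schedule J m p,
        S'.Normal ∧ S'.Omega w = S.Omega w) ∧
    ((∃ S : Schedule J m p, S.Optimal w) →
      ∃ S' : Schedule J m p, S'.Optimal w ∧ S'.Normal) :=
  ⟨fun S => ⟨S.normalize, S.normalize_normal, S.Omega_normalize w⟩,
    fun ⟨S, hS⟩ => ⟨S.normalize, hS.normalize, S.normalize_normal⟩⟩

/-- For every feasible schedule `S` there is a feasible
schedule `S'` that is normal and has the same total weighted overlap;
consequently, if an optimal feasible schedule exists, then there exists an
optimal feasible schedule that is normal. -/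
theorem exists_normal_with_same_overlap_and_exists_optimal_normal
    {J : Type} [Fintype J] [DecidableEq J] {m : ℕ} (hm : 1 ≤ m)
    (p w : J → ℝ) (hp : ∀ j, 0 < p j) (hw : ∀ j, 0 < w j) :
    (∀ S : Schedule J m p, ∃ S' : Schedule J m p,
        S'.Normal ∧ S'.Omega w = S.Omega w) ∧
    ((∃ S : Schedule J m p, S.Optimal w) →
      ∃ S' : Schedule J m p, S'.Optimal w ∧ S'.Normal) :=
  exists_normal_with_same_overlap_and_exists_optimal_normal_general p w
end

section
/- Let S be an optimal feasible schedule that is normal, and for each shared processor i let X_i = { j ∈ J : μ(j) = i and f_j(S) > 0 }. Then for each i with X_i ≠ ∅ there is no idle time on processor i in the interval (0, max{ f_j(S) : j ∈ X_i }); that is, every point of this interval, except possibly finitely many, lies in some interval of ⋃_{j∈X_i} I_j. -/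
/-!
If processor `i` were idle on an interval `(a, b)` before `F = max f_j(S)`, shift every interval
of processor `i` lying after the gap to the left by `δ < b - a`. Lengths, private parts and
normality are preserved, and processor `i` is now free on `(F - δ, ∞)`. Give the job `j₀` with
`f_{j₀}(S) = F` an extra shared interval `(F - δ, F - δ/2)` and shorten its private part by `δ/2`.
As `c_{j₀} ≥ F`, every shared interval still ends before its job's private part, so each overlap
equals the total shared length `p_j - c_j`, and `Ω` grows by `w_{j₀} δ/2 > 0`.
-/

open Set

theorem exists_gap_of_infinite_uncovered {x y : ℝ} {s : Finset (ℝ × ℝ)}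
    (hs : ∀ q ∈ s, q.1 ≤ q.2) (h : (Ioo x y \ ⋃ q ∈ s, Ioo q.1 q.2).Infinite) :
    ∃ a b, x ≤ a ∧ a < b ∧ b ≤ y ∧ ∀ q ∈ s, q.2 ≤ a ∨ b ≤ q.1 := by
  set U := Ioo x y ∩ (⋃ q ∈ s, Icc q.1 q.2)ᶜ
  have hU : IsOpen U :=
    isOpen_Ioo.inter (isClosed_biUnion_finset fun q _ => isClosed_Icc).isOpen_compl
  -- an uncovered point outside `U` is one of the finitely many endpoints
  obtain ⟨z, hz⟩ : U.Nonempty := by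
    by_contra hempty
    refine h ((s.finite_toSet.biUnion fun q _ => toFinite {q.1, q.2}).subset ?_)
    rintro t ⟨ht, htIoo⟩
    obtain ⟨q, hq, htq⟩ : ∃ q ∈ s, t ∈ Icc q.1 q.2 := by
      by_contra hnot
      exact hempty ⟨t, ht, by simpa using hnot⟩
    refine mem_biUnion hq ?_
    by_contra hne
    simp only [mem_insert_iff, mem_singleton_iff, not_or] at hne
    exact htIoo (mem_biUnion hq ⟨lt_of_le_of_ne htq.1 (Ne.symm hne.1),
      lt_of_le_of_ne htq.2 hne.2⟩)
  obtain ⟨a, b, hzab, hsub⟩ := mem_nhds_iff_exists_Ioo_subset.1 (hU.mem_nhds hz)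
  have hab : a < b := hzab.1.trans hzab.2
  obtain ⟨hxa, hby⟩ := (Ioo_subset_Ioo_iff hab).1 (hsub.trans inter_subset_left)
  refine ⟨a, b, hxa, hab, hby, fun q hq => ?_⟩
  by_contra! hmeet
  set t := (max a q.1 + min b q.2) / 2
  have hqv := hs q hq
  have ht : t ∈ Ioo a b := by
    constructor <;> simp only [t] <;>
      linarith [le_max_left a q.1, min_le_left b q.2, lt_min hab hmeet.1, max_lt hab hmeet.2]
  have htq : t ∈ Icc q.1 q.2 := by
    constructor <;> simp only [t] <;>
      linarith [le_max_right a q.1, min_le_right b q.2, lt_min hab hmeet.1, max_lt hab hmeet.2,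
        max_le hmeet.1.le hqv, le_min hmeet.2.le hqv]
  exact (hsub ht).2 (mem_biUnion hq htq)

noncomputable def shiftFrom (b δ : ℝ) (q : ℝ × ℝ) : ℝ × ℝ :=
  if b ≤ q.1 then (q.1 - δ, q.2 - δ) else q

section shiftFrom

variable {a b δ : ℝ} {q q' : ℝ × ℝ}

theorem shiftFrom_snd_sub_fst (b δ : ℝ) (q : ℝ × ℝ) :
    (shiftFrom b δ q).2 - (shiftFrom b δ q).1 = q.2 - q.1 := by
  unfold shiftFrom
  split_ifs <;> simp

theorem shiftFrom_snd_le (hδ : 0 ≤ δ) : (shiftFrom b δ q).2 ≤ q.2 := by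
  unfold shiftFrom
  split_ifs <;> simp [hδ]

theorem shiftFrom_fst_nonneg (hδb : δ ≤ b) (hq : 0 ≤ q.1) : 0 ≤ (shiftFrom b δ q).1 := by
  unfold shiftFrom
  split_ifs with h
  · simp only; linarith
  · exact hq

theorem shiftFrom_snd_le_sub {F : ℝ} (haF : a + δ ≤ F) (hq : q.2 ≤ a ∨ b ≤ q.1)
    (hqF : q.2 ≤ F) : (shiftFrom b δ q).2 ≤ F - δ := by
  unfold shiftFrom
  split_ifs with h
  · simp only; linarith
  · linarith [hq.resolve_right h]

theorem shiftFrom_snd_le_fst (hδ : δ ≤ b - a) (hq : q.2 ≤ a ∨ b ≤ q.1) (hqv : q.1 ≤ q.2)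
    (hqq' : q.2 ≤ q'.1) : (shiftFrom b δ q).2 ≤ (shiftFrom b δ q').1 := by
  unfold shiftFrom
  split_ifs with h h' h'
  · simp only; linarith
  · exact absurd (h.trans (hqv.trans hqq')) h'
  · simp only; linarith [hq.resolve_right h]
  · exact hqq'

theorem injOn_shiftFrom (hδ : δ < b - a) :
    InjOn (shiftFrom b δ) {q | q.1 ≤ q.2 ∧ (q.2 ≤ a ∨ b ≤ q.1)} := by
  rintro q ⟨hqv, hq⟩ q' ⟨hqv', hq'⟩ heq
  unfold shiftFrom at heq
  split_ifs at heq with h h' h'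
  · simp only [Prod.mk.injEq] at heq
    exact Prod.ext (by linarith) (by linarith)
  · linarith [hq'.resolve_right h', congrArg Prod.snd heq]
  · linarith [hq.resolve_right h, congrArg Prod.snd heq]
  · exact heq

end shiftFrom

namespace Schedule

variable {J : Type} [Fintype J] [DecidableEq J] {m : ℕ} {p : J → ℝ}

theorem snd_le_ftime (S : Schedule J m p) {j : J} {q : ℝ × ℝ} (hq : q ∈ S.iv j) :
    q.2 ≤ S.ftime j := by
  have hmem := Finset.mem_image_of_mem Prod.snd hq
  obtain ⟨x, hx⟩ := Finset.max_of_mem hmem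
  rw [ftime, hx, WithBot.unbotD_coe]
  exact Finset.le_max_of_eq hmem hx

theorem Normal.snd_le_c {S : Schedule J m p} (hS : S.Normal) :
    ∀ j, ∀ q ∈ S.iv j, q.2 ≤ S.c j :=
  fun j _ hq => (S.snd_le_ftime hq).trans (hS j)

theorem Omega_eq_of_forall_snd_le_c (S : Schedule J m p) (w : J → ℝ)
    (h : ∀ j, ∀ q ∈ S.iv j, q.2 ≤ S.c j) : S.Omega w = ∑ j, w j * (p j - S.c j) := by
  refine Finset.sum_congr rfl fun j _ => ?_
  rw [← S.total j, add_sub_cancel_left, overlap]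
  congr 1
  refine Finset.sum_congr rfl fun q hq => ?_
  rw [min_eq_right (h j q hq), max_eq_right (sub_nonneg.2 (S.iv_valid j q hq).2)]

section mapProcessor

variable (S : Schedule J m p) (i : Fin m) (k : ℝ × ℝ → ℝ × ℝ) (G : Set (ℝ × ℝ))
  (hG : ∀ j, S.mu j = i → ∀ q ∈ S.iv j, q ∈ G)
  (hlen : ∀ q ∈ G, (k q).2 - (k q).1 = q.2 - q.1)
  (hfst : ∀ q ∈ G, 0 ≤ (k q).1)
  (hdisj : ∀ q ∈ G, ∀ q' ∈ G, q.2 ≤ q'.1 → (k q).2 ≤ (k q').1)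
  (hinj : InjOn k G)

noncomputable def mapProcessor : Schedule J m p where
  mu := S.mu
  iv j := if S.mu j = i then (S.iv j).image k else S.iv j
  c := S.c
  c_nonneg := S.c_nonneg
  iv_valid j q' hq' := by
    split_ifs at hq' with hj
    · obtain ⟨q, hq, rfl⟩ := Finset.mem_image.1 hq'
      have := hlen q (hG j hj q hq)
      have := (S.iv_valid j q hq).2
      exact ⟨hfst q (hG j hj q hq), by linarith⟩
    · exact S.iv_valid j q' hq'
  iv_disjoint j q' hq' q'' hq'' hne := by
    split_ifs at hq' hq'' with hj
    · obtain ⟨q, hq, rfl⟩ := Finset.mem_image.1 hq'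
      obtain ⟨r, hr, rfl⟩ := Finset.mem_image.1 hq''
      exact (S.iv_disjoint j q hq r hr fun h => hne (h ▸ rfl)).imp
        (hdisj q (hG j hj q hq) r (hG j hj r hr)) (hdisj r (hG j hj r hr) q (hG j hj q hq))
    · exact S.iv_disjoint j q' hq' q'' hq'' hne
  total j := by
    split_ifs with hj
    · rw [Finset.sum_image fun q hq r hr => hinj (hG j hj q hq) (hG j hj r hr), ← S.total j]
      congr 1
      exact Finset.sum_congr rfl fun q hq => hlen q (hG j hj q hq)
    · exact S.total j
  shared_disjoint j j' hjj' hmu q' hq' q'' hq'' := by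
    by_cases hj : S.mu j = i
    · have hj' : S.mu j' = i := hmu ▸ hj
      rw [if_pos hj] at hq'
      rw [if_pos hj'] at hq''
      obtain ⟨q, hq, rfl⟩ := Finset.mem_image.1 hq'
      obtain ⟨r, hr, rfl⟩ := Finset.mem_image.1 hq''
      exact (S.shared_disjoint j j' hjj' hmu q hq r hr).imp
        (hdisj q (hG j hj q hq) r (hG j' hj' r hr)) (hdisj r (hG j' hj' r hr) q (hG j hj q hq))
    · have hj' : ¬ S.mu j' = i := hmu ▸ hj
      rw [if_neg hj] at hq'
      rw [if_neg hj'] at hq''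
      exact S.shared_disjoint j j' hjj' hmu q' hq' q'' hq''

variable {S i k G hG hlen hfst hdisj hinj} in
theorem forall_mem_mapProcessor_iv {P : J → ℝ × ℝ → Prop}
    (hi : ∀ j, S.mu j = i → ∀ q ∈ S.iv j, P j (k q))
    (hni : ∀ j, S.mu j ≠ i → ∀ q ∈ S.iv j, P j q) :
    ∀ j, ∀ q ∈ (S.mapProcessor i k G hG hlen hfst hdisj hinj).iv j, P j q := by
  intro j q' hq'
  by_cases hj : S.mu j = i
  · have hq'' : q' ∈ (S.iv j).image k := by simpa only [mapProcessor, if_pos hj] using hq'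
    obtain ⟨q, hq, rfl⟩ := Finset.mem_image.1 hq''
    exact hi j hj q hq
  · exact hni j hj q' (by simpa only [mapProcessor, if_neg hj] using hq')

theorem exists_shiftLeft {S : Schedule J m p} (hS : ∀ j, ∀ q ∈ S.iv j, q.2 ≤ S.c j) {i : Fin m}
    {a b δ F : ℝ} (ha : 0 ≤ a) (hδ : 0 ≤ δ) (hδb : δ < b - a) (haF : a + δ ≤ F)
    (hi : ∀ j, S.mu j = i → ∀ q ∈ S.iv j, (q.2 ≤ a ∨ b ≤ q.1) ∧ q.2 ≤ F) :
    ∃ S' : Schedule J m p, S'.mu = S.mu ∧ S'.c = S.c ∧ (∀ j, ∀ q ∈ S'.iv j, q.2 ≤ S'.c j) ∧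
      ∀ j, S.mu j = i → ∀ q ∈ S'.iv j, q.2 ≤ F - δ := by
  refine ⟨S.mapProcessor i (shiftFrom b δ) {q | 0 ≤ q.1 ∧ q.1 ≤ q.2 ∧ (q.2 ≤ a ∨ b ≤ q.1)}
    (fun j hj q hq => ⟨(S.iv_valid j q hq).1, (S.iv_valid j q hq).2, (hi j hj q hq).1⟩)
    (fun q _ => shiftFrom_snd_sub_fst b δ q)
    (fun q hq => shiftFrom_fst_nonneg (by linarith) hq.1)
    (fun q hq q' _ => shiftFrom_snd_le_fst hδb.le hq.2.2 hq.2.1)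
    ((injOn_shiftFrom hδb).mono fun q hq => hq.2), rfl, rfl, ?_, ?_⟩
  · exact forall_mem_mapProcessor_iv (fun j _ q hq => (shiftFrom_snd_le hδ).trans (hS j q hq))
      fun j _ => hS j
  · intro j hj q hq
    exact forall_mem_mapProcessor_iv (P := fun j q => S.mu j = i → q.2 ≤ F - δ)
      (fun j hj q hq _ => shiftFrom_snd_le_sub haF (hi j hj q hq).1 (hi j hj q hq).2)
      (fun j hj _ _ hj' => absurd hj' hj) j q hq hj

end mapProcessor

section addInterval

variable (S : Schedule J m p) (j₀ : J) (u ε : ℝ) (hu : 0 ≤ u) (hε : 0 < ε) (hc : ε ≤ S.c j₀)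
  (hfree : ∀ j, S.mu j = S.mu j₀ → ∀ q ∈ S.iv j, q.2 ≤ u)

noncomputable def addInterval : Schedule J m p where
  mu := S.mu
  iv := Function.update S.iv j₀ (insert (u, u + ε) (S.iv j₀))
  c := Function.update S.c j₀ (S.c j₀ - ε)
  c_nonneg j := by
    rcases eq_or_ne j j₀ with rfl | hj
    · rw [Function.update_self]; linarith
    · rw [Function.update_of_ne hj]; exact S.c_nonneg j
  iv_valid j q hq := by
    rcases eq_or_ne j j₀ with rfl | hj
    · rw [Function.update_self, Finset.mem_insert] at hq
      rcases hq with rfl | hq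
      · exact ⟨hu, by simp only; linarith⟩
      · exact S.iv_valid j q hq
    · rw [Function.update_of_ne hj] at hq
      exact S.iv_valid j q hq
  iv_disjoint j q hq q' hq' hne := by
    rcases eq_or_ne j j₀ with rfl | hj
    · rw [Function.update_self, Finset.mem_insert] at hq hq'
      rcases hq with rfl | hq <;> rcases hq' with rfl | hq'
      · exact absurd rfl hne
      · exact Or.inr (hfree j rfl q' hq')
      · exact Or.inl (hfree j rfl q hq)
      · exact S.iv_disjoint j q hq q' hq' hne
    · rw [Function.update_of_ne hj] at hq hq'
      exact S.iv_disjoint j q hq q' hq' hne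
  total j := by
    rcases eq_or_ne j j₀ with rfl | hj
    · have hnew : (u, u + ε) ∉ S.iv j := fun h => by linarith [hfree j rfl _ h]
      rw [Function.update_self, Function.update_self, Finset.sum_insert hnew, ← S.total j]
      ring
    · rw [Function.update_of_ne hj, Function.update_of_ne hj]
      exact S.total j
  shared_disjoint j j' hjj' hmu q hq q' hq' := by
    rcases eq_or_ne j j₀ with rfl | hj
    · rw [Function.update_self, Finset.mem_insert] at hq
      rw [Function.update_of_ne hjj'.symm] at hq'
      rcases hq with rfl | hq
      · exact Or.inr (hfree j' hmu.symm q' hq')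
      · exact S.shared_disjoint j j' hjj' hmu q hq q' hq'
    · rw [Function.update_of_ne hj] at hq
      rcases eq_or_ne j' j₀ with rfl | hj'
      · rw [Function.update_self, Finset.mem_insert] at hq'
        rcases hq' with rfl | hq'
        · exact Or.inl (hfree j hmu q hq)
        · exact S.shared_disjoint j j' hjj' hmu q hq q' hq'
      · rw [Function.update_of_ne hj'] at hq'
        exact S.shared_disjoint j j' hjj' hmu q hq q' hq'

variable {S j₀ u ε}

theorem addInterval_snd_le_c (hS : ∀ j, ∀ q ∈ S.iv j, q.2 ≤ S.c j) (h : u + 2 * ε ≤ S.c j₀) :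
    ∀ j, ∀ q ∈ (S.addInterval j₀ u ε hu hε hc hfree).iv j,
      q.2 ≤ (S.addInterval j₀ u ε hu hε hc hfree).c j := by
  intro j q hq
  simp only [addInterval] at hq ⊢
  rcases eq_or_ne j j₀ with rfl | hj
  · rw [Function.update_self, Finset.mem_insert] at hq
    rw [Function.update_self]
    rcases hq with rfl | hq
    · simp only; linarith
    · linarith [hfree j rfl q hq]
  · rw [Function.update_of_ne hj] at hq ⊢
    exact hS j q hq

theorem Omega_addInterval (w : J → ℝ) (hS : ∀ j, ∀ q ∈ S.iv j, q.2 ≤ S.c j)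
    (h : u + 2 * ε ≤ S.c j₀) :
    (S.addInterval j₀ u ε hu hε hc hfree).Omega w = S.Omega w + w j₀ * ε := by
  rw [Omega_eq_of_forall_snd_le_c _ w (addInterval_snd_le_c hu hε hc hfree hS h),
    Omega_eq_of_forall_snd_le_c S w hS]
  have hterm : ∀ j, w j * (p j - (S.addInterval j₀ u ε hu hε hc hfree).c j) =
      w j * (p j - S.c j) + if j = j₀ then w j₀ * ε else 0 := by
    intro j
    rcases eq_or_ne j j₀ with rfl | hj
    · simp only [addInterval, Function.update_self, if_true]; ring
    · simp only [addInterval, Function.update_of_ne hj, if_neg hj, add_zero]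
  simp_rw [hterm, Finset.sum_add_distrib, Finset.sum_ite_eq', Finset.mem_univ, if_true]

end addInterval

end Schedule

open Finset in
theorem no_idle_time_of_optimal_normal_general
    {J : Type} [Fintype J] [DecidableEq J] {m : ℕ}
    (p w : J → ℝ) (hw : ∀ j, 0 < w j)
    (S : Schedule J m p) (hopt : S.Optimal w) (hnormal : S.Normal)
    (i : Fin m)
    (X : Finset J) (hX : X = Finset.univ.filter (fun j => S.mu j = i ∧ 0 < S.ftime j))
    (hne : X.Nonempty) :
    Set.Finite
      (Set.Ioo (0 : ℝ) (X.sup' hne S.ftime) \ ⋃ j ∈ X, ⋃ q ∈ S.iv j, Set.Ioo q.1 q.2) := by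
  set F := X.sup' hne S.ftime
  by_contra hinf
  obtain ⟨a, b, ha, hab, hbF, hgap⟩ := exists_gap_of_infinite_uncovered (s := X.biUnion S.iv)
    (fun q hq => by obtain ⟨j, -, hq⟩ := mem_biUnion.1 hq; exact (S.iv_valid j q hq).2)
    (by rwa [set_biUnion_biUnion])
  -- jobs of processor `i` outside `X` only have intervals `(0, 0)`
  have hi : ∀ j, S.mu j = i → ∀ q ∈ S.iv j, (q.2 ≤ a ∨ b ≤ q.1) ∧ q.2 ≤ F := by
    intro j hj q hq
    by_cases hjX : j ∈ X
    · exact ⟨hgap q (mem_biUnion.2 ⟨j, hjX, hq⟩), (S.snd_le_ftime hq).trans (le_sup' _ hjX)⟩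
    · have : S.ftime j ≤ 0 := by simpa [hX, hj] using hjX
      have := S.snd_le_ftime hq
      exact ⟨Or.inl (by linarith), by linarith⟩
  set δ := (b - a) / 2
  have hδ : 0 < δ := by simp only [δ]; linarith
  have hδb : δ < b - a := by simp only [δ]; linarith
  obtain ⟨S₁, hmu, hc, hS₁, hfree⟩ :=
    Schedule.exists_shiftLeft hnormal.snd_le_c ha hδ.le hδb (by linarith) hi
  obtain ⟨j₀, hj₀X, hj₀F⟩ := exists_mem_eq_sup' hne S.ftime
  have hj₀ : S.mu j₀ = i := (by simpa [hX] using hj₀X : S.mu j₀ = i ∧ _).1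
  have hcF : F ≤ S₁.c j₀ := hc ▸ hj₀F.trans_le (hnormal j₀)
  set S₂ := S₁.addInterval j₀ (F - δ) (δ / 2) (by linarith) (half_pos hδ) (by linarith)
    fun j hj => hfree j ((hmu ▸ hj).trans hj₀)
  have hΩ₂ : S₂.Omega w = S₁.Omega w + w j₀ * (δ / 2) :=
    Schedule.Omega_addInterval _ _ _ _ w hS₁ (by linarith)
  have hΩ₁ : S₁.Omega w = S.Omega w := by
    rw [S₁.Omega_eq_of_forall_snd_le_c w hS₁, S.Omega_eq_of_forall_snd_le_c w hnormal.snd_le_c, hc]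
  linarith [hopt S₂, mul_pos (hw j₀) (half_pos hδ)]

open Finset in
/-- Let `S` be an optimal normal schedule and, for a shared
processor `i`, let `X_i` be the set of jobs assigned to `i` with positive
shared completion time.  If `X_i` is nonempty, then there is no idle time on
processor `i` in `(0, max{f_j(S) : j ∈ X_i})`: every point of that interval,
except possibly finitely many, lies in some shared interval of a job of `X_i`. -/
theorem no_idle_time_of_optimal_normal
    {J : Type} [Fintype J] [DecidableEq J] {m : ℕ} (hm : 1 ≤ m)
    (p w : J → ℝ) (hp : ∀ j, 0 < p j) (hw : ∀ j, 0 < w j)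
    (S : Schedule J m p) (hopt : S.Optimal w) (hnormal : S.Normal)
    (i : Fin m)
    (X : Finset J) (hX : X = Finset.univ.filter (fun j => S.mu j = i ∧ 0 < S.ftime j))
    (hne : X.Nonempty) :
    Set.Finite
      (Set.Ioo (0 : ℝ) (X.sup' hne S.ftime) \ ⋃ j ∈ X, ⋃ q ∈ S.iv j, Set.Ioo q.1 q.2) :=
  no_idle_time_of_optimal_normal_general p w hw S hopt hnormal i X hX hne
end

section
/- If an optimal feasible schedule of the shared multi-processor instance exists, then there exists an optimal feasible schedule that is normal and non-preemptive. -/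
/-- A schedule is non-preemptive if each job uses at most one shared interval. -/
def Schedule.NonPreemptive {J : Type} [Fintype J] [DecidableEq J] {m : ℕ} {p : J → ℝ}
    (S : Schedule J m p) : Prop :=
  ∀ j, (S.iv j).card ≤ 1

/-!
Any schedule can be compacted without changing the overlap `t_j` of any job. On each shared
processor, order the jobs by the time `e_j` at which their overlapping shared work ends, and pack
them back to back from time `0`, giving job `j` a single interval of length `t_j` and private
time `p_j - t_j`. The overlapping pieces of the jobs up to `j` are disjoint subsets of `(0, e_j]`,
so the packed interval of `j` ends by `e_j ≤ c_j ≤ p_j - t_j`: the compacted schedule is normal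
and overlaps exactly `t_j`. Compacting an optimal schedule proves the theorem.
-/

open MeasureTheory in
theorem sum_max_sub_le_of_pairwiseDisjoint_Ioo {ι : Type*} {s : Finset ι} {a b : ι → ℝ}
    {lo hi : ℝ} (hdisj : (s : Set ι).PairwiseDisjoint fun k => Set.Ioo (a k) (b k))
    (hlo : ∀ k ∈ s, lo ≤ a k) (hhi : ∀ k ∈ s, b k ≤ hi) (hle : lo ≤ hi) :
    ∑ k ∈ s, max 0 (b k - a k) ≤ hi - lo :=
  calc ∑ k ∈ s, max 0 (b k - a k) = volume.real (⋃ k ∈ s, Set.Ioo (a k) (b k)) := by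
        rw [measureReal_biUnion_finset hdisj (fun _ _ => measurableSet_Ioo)
          fun _ _ => measure_Ioo_lt_top.ne]
        simp only [Real.volume_real_Ioo, max_comm]
    _ ≤ volume.real (Set.Icc lo hi) :=
        measureReal_mono (Set.iUnion₂_subset fun k hk =>
          Set.Ioo_subset_Icc_self.trans (Set.Icc_subset_Icc (hlo k hk) (hhi k hk)))
          measure_Icc_lt_top.ne
    _ = hi - lo := Real.volume_real_Icc_of_le hle

theorem Set.disjoint_Ioo_of_le_or_le {α : Type*} [LinearOrder α] [DenselyOrdered α]
    {a b a' b' : α} (h : b ≤ a' ∨ b' ≤ a) :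
    Disjoint (Set.Ioo a b) (Set.Ioo a' b') :=
  Set.Ioo_disjoint_Ioo.mpr <| h.elim
    (fun h => min_le_of_left_le (le_max_of_le_right h))
    (fun h => min_le_of_right_le (le_max_of_le_left h))

namespace Schedule

variable {J : Type} [Fintype J] [DecidableEq J] {m : ℕ} {p : J → ℝ} (S : Schedule J m p)

theorem overlap_nonneg (j : J) : 0 ≤ S.overlap j :=
  Finset.sum_nonneg fun _ _ => le_max_left _ _

theorem overlap_le_sub_c (j : J) : S.overlap j ≤ p j - S.c j := by
  have hle : S.overlap j ≤ ∑ q ∈ S.iv j, (q.2 - q.1) :=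
    Finset.sum_le_sum fun q hq =>
      max_le (sub_nonneg.mpr (S.iv_valid j q hq).2) (by linarith [min_le_right (S.c j) q.2])
  linarith [S.total j]

/-- The time at which the overlapping shared work of `j` ends, i.e. the right end of
`(0, c j) ∩ ⋃ (iv j)`, or `0` if that set is empty. -/
noncomputable def overlapEnd (j : J) : ℝ :=
  (S.iv j).fold max 0 fun q => min (S.c j) q.2

theorem overlapEnd_nonneg (j : J) : 0 ≤ S.overlapEnd j :=
  (Finset.le_fold_max _).mpr (Or.inl le_rfl)

theorem overlapEnd_le_c (j : J) : S.overlapEnd j ≤ S.c j :=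
  (Finset.fold_max_le _).mpr ⟨S.c_nonneg j, fun _ _ => min_le_left _ _⟩

theorem sum_overlap_le {s : Finset J} {e : ℝ} (hmu : ∀ i ∈ s, ∀ i' ∈ s, S.mu i = S.mu i')
    (he : ∀ i ∈ s, S.overlapEnd i ≤ e) (he₀ : 0 ≤ e) :
    ∑ i ∈ s, S.overlap i ≤ e := by
  have hdisj : (s.sigma S.iv : Set (Σ _ : J, ℝ × ℝ)).PairwiseDisjoint
      fun x => Set.Ioo x.2.1 (min (S.c x.1) x.2.2) := by
    rintro ⟨i, q⟩ hx ⟨i', q'⟩ hx' hne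
    simp only [Finset.coe_sigma, Set.mem_sigma_iff, Finset.mem_coe] at hx hx'
    refine Disjoint.mono (Set.Ioo_subset_Ioo_right (min_le_right _ _))
      (Set.Ioo_subset_Ioo_right (min_le_right _ _)) (Set.disjoint_Ioo_of_le_or_le ?_)
    obtain rfl | hii := eq_or_ne i i'
    · exact S.iv_disjoint i q hx.2 q' hx'.2 fun h => hne (h ▸ rfl)
    · exact S.shared_disjoint i i' hii (hmu i hx.1 i' hx'.1) q hx.2 q' hx'.2
  have hbound := sum_max_sub_le_of_pairwiseDisjoint_Ioo hdisj
    (fun x hx => (S.iv_valid x.1 x.2 (Finset.mem_sigma.mp hx).2).1)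
    (fun x hx => ((Finset.fold_max_le _).mp (he x.1 (Finset.mem_sigma.mp hx).1)).2 x.2
      (Finset.mem_sigma.mp hx).2) he₀
  rwa [Finset.sum_sigma, sub_zero] at hbound

noncomputable def rank (j : J) : ℝ ×ₗ Fin (Fintype.card J) :=
  toLex (S.overlapEnd j, Fintype.equivFin J j)

theorem rank_injective : Function.Injective S.rank := fun _ _ h =>
  (Fintype.equivFin J).injective (congrArg Prod.snd (toLex.injective h))

theorem overlapEnd_le_of_rank_le {i j : J} (h : S.rank i ≤ S.rank j) :
    S.overlapEnd i ≤ S.overlapEnd j :=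
  Prod.Lex.monotone_fst _ _ h

noncomputable def predecessors (j : J) : Finset J :=
  {i | S.mu i = S.mu j ∧ S.rank i < S.rank j}

theorem insert_predecessors_subset {i j : J} (hmu : S.mu i = S.mu j) (h : S.rank i < S.rank j) :
    insert i (S.predecessors i) ⊆ S.predecessors j := by
  intro k hk
  simp only [predecessors, Finset.mem_insert, Finset.mem_filter, Finset.mem_univ,
    true_and] at hk ⊢
  rcases hk with rfl | ⟨hmu', hlt⟩
  · exact ⟨hmu, h⟩
  · exact ⟨hmu'.trans hmu, hlt.trans h⟩

noncomputable def start (j : J) : ℝ :=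
  ∑ i ∈ S.predecessors j, S.overlap i

theorem start_nonneg (j : J) : 0 ≤ S.start j :=
  Finset.sum_nonneg fun i _ => S.overlap_nonneg i

theorem start_add_overlap (j : J) :
    S.start j + S.overlap j = ∑ i ∈ insert j (S.predecessors j), S.overlap i := by
  rw [Finset.sum_insert (by simp [predecessors]), start, add_comm]

theorem start_add_overlap_le_start {i j : J} (hmu : S.mu i = S.mu j) (h : S.rank i < S.rank j) :
    S.start i + S.overlap i ≤ S.start j := by
  rw [start_add_overlap]
  exact Finset.sum_le_sum_of_subset_of_nonneg (S.insert_predecessors_subset hmu h)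
    fun k _ _ => S.overlap_nonneg k

theorem start_add_overlap_le_overlapEnd (j : J) : S.start j + S.overlap j ≤ S.overlapEnd j := by
  rw [start_add_overlap]
  have hpred :
      ∀ i ∈ insert j (S.predecessors j), S.mu i = S.mu j ∧ S.rank i ≤ S.rank j := by
    simp only [predecessors, Finset.mem_insert, Finset.mem_filter, Finset.mem_univ, true_and]
    rintro i (rfl | ⟨hmu, hlt⟩)
    exacts [⟨rfl, le_rfl⟩, ⟨hmu, hlt.le⟩]
  exact S.sum_overlap_le (fun i hi i' hi' => (hpred i hi).1.trans (hpred i' hi').1.symm)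
    (fun i hi => S.overlapEnd_le_of_rank_le (hpred i hi).2) (S.overlapEnd_nonneg j)

theorem start_add_overlap_le_sub_overlap (j : J) :
    S.start j + S.overlap j ≤ p j - S.overlap j := by
  linarith [S.start_add_overlap_le_overlapEnd j, S.overlapEnd_le_c j, S.overlap_le_sub_c j]

/-- Jobs with zero overlap get a degenerate interval, which is harmless because `predecessors`
also counts them. -/
noncomputable def compact : Schedule J m p where
  mu := S.mu
  iv j := {(S.start j, S.start j + S.overlap j)}
  c j := p j - S.overlap j
  c_nonneg j := by linarith [S.overlap_le_sub_c j, S.c_nonneg j]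
  iv_valid j q hq := by
    rw [Finset.mem_singleton.mp hq]
    exact ⟨S.start_nonneg j, le_add_of_nonneg_right (S.overlap_nonneg j)⟩
  iv_disjoint j q hq q' hq' hne :=
    absurd ((Finset.mem_singleton.mp hq).trans (Finset.mem_singleton.mp hq').symm) hne
  total j := by simp
  shared_disjoint j j' hne hmu q hq q' hq' := by
    rw [Finset.mem_singleton.mp hq, Finset.mem_singleton.mp hq']
    rcases lt_or_gt_of_ne (S.rank_injective.ne hne) with h | h
    exacts [Or.inl (S.start_add_overlap_le_start hmu h),
      Or.inr (S.start_add_overlap_le_start hmu.symm h)]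

@[simp]
theorem compact_overlap (j : J) : S.compact.overlap j = S.overlap j := by
  change ∑ q ∈ {(S.start j, S.start j + S.overlap j)},
    max 0 (min (p j - S.overlap j) q.2 - q.1) = S.overlap j
  rw [Finset.sum_singleton, min_eq_right (S.start_add_overlap_le_sub_overlap j),
    add_sub_cancel_left, max_eq_right (S.overlap_nonneg j)]

theorem compact_Omega (w : J → ℝ) : S.compact.Omega w = S.Omega w := by
  simp [Omega]

theorem compact_normal : S.compact.Normal := fun j => by
  simp only [ftime, compact, Finset.image_singleton, Finset.max_singleton, WithBot.unbotD_coe]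
  exact S.start_add_overlap_le_sub_overlap j

theorem compact_nonPreemptive : S.compact.NonPreemptive := fun _ =>
  (Finset.card_singleton _).le

end Schedule

theorem exists_optimal_normal_nonpreemptive_general
    {J : Type} [Fintype J] [DecidableEq J] {m : ℕ}
    (p w : J → ℝ)
    (hex : ∃ S : Schedule J m p, S.Optimal w) :
    ∃ S' : Schedule J m p, S'.Optimal w ∧ S'.Normal ∧ S'.NonPreemptive := by
  obtain ⟨S, hS⟩ := hex
  refine ⟨S.compact, fun S' => ?_, S.compact_normal, S.compact_nonPreemptive⟩
  rw [S.compact_Omega]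
  exact hS S'

/-- If an optimal feasible schedule exists, then there exists
an optimal feasible schedule that is normal and non-preemptive. -/
theorem exists_optimal_normal_nonpreemptive
    {J : Type} [Fintype J] [DecidableEq J] {m : ℕ} (hm : 1 ≤ m)
    (p w : J → ℝ) (hp : ∀ j, 0 < p j) (hw : ∀ j, 0 < w j)
    (hex : ∃ S : Schedule J m p, S.Optimal w) :
    ∃ S' : Schedule J m p, S'.Optimal w ∧ S'.Normal ∧ S'.NonPreemptive :=
  exists_optimal_normal_nonpreemptive_general p w hex
end

section
/- Let S be an optimal feasible synchronized schedule that executes jobs j_1,…,j_k with weights w_1,…,w_k on some shared processor in this order. Then for each i ∈ {1,…,k−1} it holds that w_i ≥ W_{i−1}, where W_{i−1} = Σ_{ℓ=i+1}^{k} w_ℓ/2^{ℓ−i}. -/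
/-- Start times on a shared processor for a sequence of processing times `q`:
`Tseq q 0 = 0` and `Tseq q (i+1) = (Tseq q i + q_i)/2`; job `i` (0-indexed)
occupies the shared processor during `(Tseq q i, Tseq q (i+1))`. -/
noncomputable def Tseq (q : List ℝ) : ℕ → ℝ
  | 0 => 0
  | i + 1 => (Tseq q i + q.getD i 0) / 2

/-- A sequence of processing times is feasible on a shared processor if every
job is long enough: `q_i > T_i`. -/
def ListFeasible (q : List ℝ) : Prop :=
  ∀ i < q.length, Tseq q i < q.getD i 0

/-- Total weighted overlap of one shared processor executing jobs with
processing times `q` and weights `v` (in this order): the overlap of the `i`-th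
job is `(q_i - T_i)/2`. -/
noncomputable def listOverlap (q v : List ℝ) : ℝ :=
  ∑ i ∈ Finset.range q.length, v.getD i 0 * (q.getD i 0 - Tseq q i) / 2

/-- A synchronized schedule: each of the `m` shared processors gets a finite
sequence of distinct jobs, and each job appears on at most one shared processor
(jobs appearing nowhere execute on their private processors only). -/
structure SyncSchedule (J : Type) (m : ℕ) where
  seq : Fin m → List J
  nodup : ∀ i, (seq i).Nodup
  disj : ∀ i i' j, j ∈ seq i → j ∈ seq i' → i = i'

namespace SyncSchedule

variable {J : Type} {m : ℕ}

/-- Feasibility of a synchronized schedule for processing times `p`. -/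
def Feasible (p : J → ℝ) (S : SyncSchedule J m) : Prop :=
  ∀ i, ListFeasible ((S.seq i).map p)

/-- Total weighted overlap of a synchronized schedule. -/
noncomputable def Omega (p w : J → ℝ) (S : SyncSchedule J m) : ℝ :=
  ∑ i, listOverlap ((S.seq i).map p) ((S.seq i).map w)

/-- A feasible synchronized schedule is optimal if it maximizes the total
weighted overlap among all feasible synchronized schedules. -/
def Optimal (p w : J → ℝ) (S : SyncSchedule J m) : Prop :=
  S.Feasible p ∧ ∀ S' : SyncSchedule J m, S'.Feasible p → S'.Omega p w ≤ S.Omega p w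

end SyncSchedule


lemma getD_eraseIdx' (q : List ℝ) (i ℓ : ℕ) :
    (q.eraseIdx i).getD ℓ 0 = if ℓ < i then q.getD ℓ 0 else q.getD (ℓ+1) 0 := by
  simp only [List.getD_eq_getElem?_getD, List.getElem?_eraseIdx]
  split <;> rfl

lemma map_eraseIdx' {α β : Type*} (f : α → β) (l : List α) (i : ℕ) :
    (l.eraseIdx i).map f = (l.map f).eraseIdx i := by
  induction l generalizing i with
  | nil => simp
  | cons a l ih => cases i <;> simp [ih]

lemma Tseq_succ (q : List ℝ) (i : ℕ) : Tseq q (i+1) = (Tseq q i + q.getD i 0) / 2 := rfl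

lemma Tseq_eraseIdx_le (q : List ℝ) (i : ℕ) :
    ∀ ℓ, ℓ ≤ i → Tseq (q.eraseIdx i) ℓ = Tseq q ℓ
  | 0, _ => rfl
  | ℓ+1, h => by
    rw [Tseq_succ, Tseq_succ, Tseq_eraseIdx_le q i ℓ (by omega), getD_eraseIdx',
      if_pos (by omega)]

lemma Tseq_eraseIdx_ge (q : List ℝ) (i : ℕ) (n : ℕ) :
    Tseq (q.eraseIdx i) (i + n) = Tseq q (i + n + 1) - (Tseq q (i+1) - Tseq q i)/2^n := by
  induction n with
  | zero =>
    rw [Nat.add_zero, Tseq_eraseIdx_le q i i le_rfl]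
    simp
  | succ n ih =>
    have hR := Tseq_succ q (i+n+1)
    have hL := Tseq_succ (q.eraseIdx i) (i+n)
    have hg := getD_eraseIdx' q i (i+n)
    rw [if_neg (by omega)] at hg
    have h2 : (2:ℝ)^n ≠ 0 := by positivity
    rw [show i + (n+1) = (i+n)+1 from rfl, hL, ih, hg,
        show i + n + 1 + 1 = (i+n+1)+1 from rfl, hR, pow_succ]
    field_simp
    ring

lemma listOverlap_eraseIdx (q v : List ℝ) (k i : ℕ) (hq : q.length = k) (hik : i + 2 ≤ k) :
    listOverlap (q.eraseIdx i) (v.eraseIdx i)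
      = listOverlap q v + (Tseq q (i+1) - Tseq q i) *
        ((∑ ℓ ∈ Finset.Ico (i+1) k, v.getD ℓ 0 / 2^(ℓ-i)) - v.getD i 0) := by
  set d := Tseq q (i+1) - Tseq q i with hdd
  set F : ℕ → ℝ := fun ℓ => v.getD ℓ 0 * (q.getD ℓ 0 - Tseq q ℓ) / 2 with hF
  set G : ℕ → ℝ := fun ℓ =>
    v.getD (ℓ+1) 0 * (q.getD (ℓ+1) 0 - Tseq q (ℓ+1) + d/2^(ℓ-i)) / 2 with hG
  have hlen : (q.eraseIdx i).length = k - 1 := by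
    rw [List.length_eraseIdx_of_lt (by omega), hq]
  have hterm : ∀ ℓ, (v.eraseIdx i).getD ℓ 0 * ((q.eraseIdx i).getD ℓ 0 - Tseq (q.eraseIdx i) ℓ) / 2
      = if ℓ < i then F ℓ else G ℓ := by
    intro ℓ
    rw [getD_eraseIdx', getD_eraseIdx' q]
    by_cases h : ℓ < i
    · rw [if_pos h, if_pos h, if_pos h, Tseq_eraseIdx_le q i ℓ (le_of_lt h)]
    · rw [if_neg h, if_neg h, if_neg h]
      obtain ⟨n, rfl⟩ : ∃ n, ℓ = i + n := ⟨ℓ - i, by omega⟩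
      rw [Tseq_eraseIdx_ge q i n, hG]
      simp only [Nat.add_sub_cancel_left, ← hdd]
      ring
  have hFi : F i = v.getD i 0 * d := by
    rw [hF, hdd, Tseq_succ]; ring
  have split1 : listOverlap (q.eraseIdx i) (v.eraseIdx i)
      = ∑ ℓ ∈ Finset.range i, F ℓ + ∑ ℓ ∈ Finset.Ico i (k-1), G ℓ := by
    unfold listOverlap
    rw [hlen]
    rw [Finset.sum_congr rfl (fun ℓ _ => hterm ℓ)]
    rw [Finset.range_eq_Ico, ← Finset.sum_Ico_consecutive _ (Nat.zero_le i) (by omega : i ≤ k-1)]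
    congr 1
    · rw [← Finset.range_eq_Ico]
      exact Finset.sum_congr rfl fun ℓ hℓ => if_pos (Finset.mem_range.mp hℓ)
    · exact Finset.sum_congr rfl fun ℓ hℓ => if_neg (by have := (Finset.mem_Ico.mp hℓ).1; omega)
  have split2 : listOverlap q v
      = ∑ ℓ ∈ Finset.range i, F ℓ + F i + ∑ ℓ ∈ Finset.Ico (i+1) k, F ℓ := by
    unfold listOverlap
    rw [hq, Finset.range_eq_Ico,
      ← Finset.sum_Ico_consecutive _ (Nat.zero_le i) (by omega : i ≤ k),
      Finset.sum_eq_sum_Ico_succ_bot (by omega : i < k), ← Finset.range_eq_Ico]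
    ring
  have shiftG : ∑ ℓ ∈ Finset.Ico i (k-1), G ℓ
      = ∑ ℓ ∈ Finset.Ico (i+1) k, F ℓ + d * ∑ ℓ ∈ Finset.Ico (i+1) k, v.getD ℓ 0 / 2^(ℓ-i) := by
    rw [Finset.mul_sum, ← Finset.sum_add_distrib,
      Finset.sum_Ico_eq_sum_range, Finset.sum_Ico_eq_sum_range,
      show k - (i+1) = k - 1 - i from by omega]
    apply Finset.sum_congr rfl
    intro j _
    rw [hG, hF]
    simp only [Nat.add_sub_cancel_left, show i + 1 + j = i + j + 1 from by omega,
      show i + j + 1 - i = j + 1 from by omega, pow_succ]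
    ring
  rw [split1, shiftG, split2, hFi]
  ring

/-- If an optimal feasible synchronized schedule executes the
jobs `js = [j_1, …, j_k]` (here 0-indexed) on some shared processor in this
order, then for each (1-indexed) `i ∈ {1, …, k-1}` one has `w_i ≥ W_{i-1}`,
where `W_{i-1} = Σ_{ℓ=i+1}^{k} w_ℓ / 2^(ℓ-i)`.  In 0-indexed form: for every
`i < k - 1`, `Σ_{ℓ=i+1}^{k-1} w_{js ℓ} / 2^(ℓ-i) ≤ w_{js i}`. -/
theorem weight_ge_W_of_optimal
    {J : Type} [Fintype J] [DecidableEq J] {m : ℕ} (hm : 1 ≤ m)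
    (p w : J → ℝ) (hp : ∀ j, 0 < p j) (hw : ∀ j, 0 < w j)
    (S : SyncSchedule J m) (hopt : S.Optimal p w)
    (r : Fin m) (k : ℕ) (hk : (S.seq r).length = k)
    (i : ℕ) (hi : i < k - 1) :
    ∑ ℓ ∈ Finset.Ico (i + 1) k, ((S.seq r).map w).getD ℓ 0 / 2 ^ (ℓ - i)
      ≤ ((S.seq r).map w).getD i 0 := by
  classical
  have hik : i + 2 ≤ k := by omega
  have hq : ((S.seq r).map p).length = k := by rw [List.length_map, hk]
  set L' := (S.seq r).eraseIdx i with hL'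
  have hS'feas0 := hopt.1
  set S' : SyncSchedule J m :=
    { seq := Function.update S.seq r L'
      nodup := fun a => by
        rcases eq_or_ne a r with rfl|h
        · rw [Function.update_self]; exact (S.nodup a).eraseIdx i
        · rw [Function.update_of_ne h]; exact S.nodup a
      disj := fun a b j hja hjb => by
        have key : ∀ c, j ∈ Function.update S.seq r L' c → j ∈ S.seq c := fun c hc => by
          rcases eq_or_ne c r with rfl|h
          · rw [Function.update_self] at hc; exact List.mem_of_mem_eraseIdx hc
          · rwa [Function.update_of_ne h] at hc
        exact S.disj a b j (key a hja) (key b hjb) } with hS'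
  have hseq' : S'.seq = Function.update S.seq r L' := rfl
  have hd : 0 < Tseq ((S.seq r).map p) (i+1) - Tseq ((S.seq r).map p) i := by
    have h1 := hS'feas0 r i (by rw [hq]; omega)
    rw [Tseq_succ]
    linarith
  have hfeas' : S'.Feasible p := by
    intro a
    rw [hseq']
    by_cases h : a = r
    · replace h := h.symm
      subst h
      rw [Function.update_self, hL', map_eraseIdx']
      intro ℓ hℓ
      rw [List.length_eraseIdx_of_lt (by rw [hq]; omega), hq] at hℓ
      rw [getD_eraseIdx']
      by_cases hcase : ℓ < i
      · rw [if_pos hcase, Tseq_eraseIdx_le _ i ℓ (le_of_lt hcase)]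
        exact hS'feas0 r ℓ (by rw [hq]; omega)
      · rw [if_neg hcase]
        obtain ⟨n, rfl⟩ : ∃ n, ℓ = i + n := ⟨ℓ - i, by omega⟩
        rw [Tseq_eraseIdx_ge]
        have h1 : Tseq ((S.seq r).map p) (i+n+1) < ((S.seq r).map p).getD (i+n+1) 0 :=
          hS'feas0 r _ (by rw [hq]; omega)
        have h2 : (0:ℝ) < (Tseq ((S.seq r).map p) (i+1) - Tseq ((S.seq r).map p) i)/2^n := by
          positivity
        linarith
    · rw [Function.update_of_ne h]
      exact hS'feas0 a
  have hOm : S'.Omega p w - S.Omega p w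
      = listOverlap (((S.seq r).map p).eraseIdx i) (((S.seq r).map w).eraseIdx i)
        - listOverlap ((S.seq r).map p) ((S.seq r).map w) := by
    unfold SyncSchedule.Omega
    rw [← Finset.sum_sub_distrib]
    rw [Finset.sum_eq_single r
      (fun b _ hb => by rw [hseq', Function.update_of_ne hb, sub_self])
      (fun h => absurd (Finset.mem_univ r) h)]
    rw [hseq', Function.update_self, hL', map_eraseIdx', map_eraseIdx']
  have hopt2 := hopt.2 S' hfeas'
  rw [listOverlap_eraseIdx ((S.seq r).map p) ((S.seq r).map w) k i hq hik] at hOm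
  by_contra hcon
  push_neg at hcon
  have h3 : 0 < (∑ ℓ ∈ Finset.Ico (i + 1) k, ((S.seq r).map w).getD ℓ 0 / 2 ^ (ℓ - i))
      - ((S.seq r).map w).getD i 0 := by linarith
  nlinarith [mul_pos hd h3]
end

section
/- Let S be a feasible synchronized schedule executing processing-time-inclusive jobs j_1,…,j_k with processing times p_1,…,p_k and weights w_1,…,w_k, in this order, on a shared processor M, and let i ∈ {1,…,k−1}. Let S' be the synchronized schedule obtained from S by exchanging jobs j_i and j_{i+1}, so that the order on M is j_1,…,j_{i−1}, j_{i+1}, j_i, j_{i+2},…,j_k, with all other processors unchanged. Then S' is feasible and Ω(S) − Ω(S') = (w_{i+1} − w_i)·T_i/4 + (p_i − p_{i+1})·Σ_{ℓ=i+2}^{k} w_ℓ/2^{ℓ+1−i} + (w_i·p_{i+1} − w_{i+1}·p_i)/4, where T_i = Σ_{ℓ=1}^{i−1} p_ℓ/2^{i−ℓ} is computed from the original order. -/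
/-- A finite collection of processing times (given as a list `q`) is
*processing-time-inclusive* if, for its ascending sort `s = [q_1, …, q_k]`,
`Σ_{ℓ=1}^{k-1} q_{ℓ+1} / 2^(k-ℓ) < q_1`; i.e. the makespan of all but the
shortest job scheduled in ascending order is shorter than the shortest job. -/
def PTInclusive (q : List ℝ) : Prop :=
  ∃ s : List ℝ, s.Perm q ∧ s.Pairwise (· ≤ ·) ∧
    ∑ ℓ ∈ Finset.range (s.length - 1), s.getD (ℓ + 1) 0 / 2 ^ (s.length - 1 - ℓ)
      < s.getD 0 0

/-!
Start times are the left fold of `T ↦ (T + q) / 2` over the processing times. The fold does not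
decrease when its list is sorted ascending, nor when a sorted list is enlarged to a sorted
superlist whose entries exceed the starting time. Applied to `q_i :: [q_0, …, q_{i-1}]`,
a subpermutation of the ascending sort `s` of all `n` processing times, this gives
`q_i / 2^(i+1) + T_i ≤ s_0 / 2^n + Σ_{ℓ≥1} s_ℓ / 2^(n-ℓ) < s_0 / 2^n + s_0 ≤ q_i / 2^n + q_i`,
so `T_i < q_i` in every order of processing-time-inclusive jobs.

Exchanging the jobs at positions `i, i+1` leaves `T_0, …, T_i` unchanged, and since the
recursion halves a difference of start times at each step, it shifts every later `T_ℓ` by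
`(p_i - p_{i+1}) / 2^(ℓ-i)`; the overlaps of the two exchanged jobs are computed directly.
-/

namespace List

variable {α : Type*} {A B : List α} {a b d : α}

lemma getD_append_cons_cons_of_length_eq {ℓ : ℕ} (h : A.length = ℓ) :
    (A ++ a :: b :: B).getD ℓ d = a := by
  simp [← h]

lemma getD_append_cons_cons_of_length_add_one_eq {ℓ : ℕ} (h : A.length + 1 = ℓ) :
    (A ++ a :: b :: B).getD ℓ d = b := by
  simp [← h]

lemma getD_append_cons_cons_length_add_two_add (r : ℕ) :
    (A ++ a :: b :: B).getD (A.length + 2 + r) d = B.getD r d := by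
  rw [getD_append_right _ _ _ _ (by omega), Nat.add_assoc, Nat.add_sub_cancel_left, Nat.add_comm]
  rfl

lemma getD_append_cons_cons_comm {ℓ : ℕ} (h₀ : ℓ ≠ A.length) (h₁ : ℓ ≠ A.length + 1) :
    (A ++ a :: b :: B).getD ℓ d = (A ++ b :: a :: B).getD ℓ d := by
  rcases lt_or_gt_of_ne h₀ with hlt | hgt
  · rw [getD_append _ _ _ _ hlt, getD_append _ _ _ _ hlt]
  · obtain ⟨r, rfl⟩ : ∃ r, ℓ = A.length + 2 + r := ⟨ℓ - (A.length + 2), by omega⟩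
    rw [getD_append_cons_cons_length_add_two_add, getD_append_cons_cons_length_add_two_add]

lemma cons_getD_take_subperm (l : List α) (d : α) {i : ℕ} (hi : i < l.length) :
    (l.getD i d :: l.take i).Subperm l := by
  refine ⟨l.take i ++ [l.getD i d], perm_append_singleton _ _, ?_⟩
  conv_rhs => rw [← take_append_drop i l]
  refine Sublist.append_left (singleton_sublist.mpr ?_) _
  rw [getD_eq_getElem _ _ hi, ← getElem_cons_drop hi]
  exact mem_cons_self

lemma exists_eq_append_cons_cons_of_getElem? {l : List α} {i : ℕ} {x y : α}
    (hx : l[i]? = some x) (hy : l[i + 1]? = some y) :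
    ∃ A B, l = A ++ x :: y :: B ∧ A.length = i := by
  obtain ⟨hi, rfl⟩ := getElem?_eq_some_iff.mp hx
  obtain ⟨hi₁, rfl⟩ := getElem?_eq_some_iff.mp hy
  refine ⟨l.take i, l.drop (i + 2), ?_, length_take_of_le hi.le⟩
  rw [← drop_eq_getElem_cons hi₁, ← drop_eq_getElem_cons hi, take_append_drop]

end List

noncomputable def finishTime (t : ℝ) (l : List ℝ) : ℝ :=
  l.foldl (fun T a => (T + a) / 2) t

@[simp]
lemma finishTime_nil (t : ℝ) : finishTime t [] = t := rfl

@[simp]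
lemma finishTime_cons (t a : ℝ) (l : List ℝ) :
    finishTime t (a :: l) = finishTime ((t + a) / 2) l := rfl

lemma finishTime_eq_add (t : ℝ) (l : List ℝ) :
    finishTime t l = finishTime 0 l + t / 2 ^ l.length := by
  induction l generalizing t with
  | nil => simp
  | cons a l ih =>
    rw [finishTime_cons, finishTime_cons, ih, ih (_ / 2), List.length_cons, pow_succ]
    ring

lemma finishTime_mono (l : List ℝ) : Monotone (finishTime · l) := by
  intro t t' h
  simp only [finishTime_eq_add t, finishTime_eq_add t', add_le_add_iff_left]
  gcongr

lemma finishTime_zero_eq_sum (l : List ℝ) :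
    finishTime 0 l = ∑ ℓ ∈ Finset.range l.length, l.getD ℓ 0 / 2 ^ (l.length - ℓ) := by
  induction l with
  | nil => simp
  | cons a l ih =>
    rw [finishTime_cons, finishTime_eq_add, ih, List.length_cons, Finset.sum_range_succ']
    simp [pow_succ, div_div, mul_comm]

lemma tseq_eq_finishTime_take (q : List ℝ) {n : ℕ} (hn : n ≤ q.length) :
    Tseq q n = finishTime 0 (q.take n) := by
  induction n with
  | zero => rfl
  | succ n ih =>
    rw [Tseq, ih (by omega), List.take_add_one, List.getElem?_eq_getElem (by omega),
      Option.toList_some, List.getD_eq_getElem _ _ (by omega)]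
    simp only [finishTime, List.foldl_append, List.foldl_cons, List.foldl_nil]

lemma finishTime_swap_le {a b : ℝ} (hba : b ≤ a) (t : ℝ) (l : List ℝ) :
    finishTime t (a :: b :: l) ≤ finishTime t (b :: a :: l) := by
  simp only [finishTime_cons]
  exact finishTime_mono l (by linarith)

lemma finishTime_cons_le_orderedInsert (a : ℝ) (l : List ℝ) (t : ℝ) :
    finishTime t (a :: l) ≤ finishTime t (l.orderedInsert (· ≤ ·) a) := by
  induction l generalizing t with
  | nil => rfl
  | cons b l ih =>
    rw [List.orderedInsert_cons]
    split_ifs with hab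
    · rfl
    · calc finishTime t (a :: b :: l) ≤ finishTime t (b :: a :: l) :=
            finishTime_swap_le (le_of_not_ge hab) t l
        _ ≤ finishTime t (b :: l.orderedInsert (· ≤ ·) a) := ih _

lemma finishTime_le_insertionSort (l : List ℝ) (t : ℝ) :
    finishTime t l ≤ finishTime t (l.insertionSort (· ≤ ·)) := by
  induction l generalizing t with
  | nil => rfl
  | cons a l ih =>
    calc finishTime t (a :: l) ≤ finishTime t (a :: l.insertionSort (· ≤ ·)) := ih _
      _ ≤ _ := finishTime_cons_le_orderedInsert a _ t

lemma finishTime_le_of_sublist {l s : List ℝ} (hls : l.Sublist s) (hs : s.Pairwise (· ≤ ·))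
    {t : ℝ} (ht : ∀ x ∈ s, t ≤ x) : finishTime t l ≤ finishTime t s := by
  induction hls generalizing t with
  | slnil => rfl
  | cons a _ ih =>
    rw [List.pairwise_cons] at hs
    calc _ ≤ finishTime t _ := ih hs.2 fun x hx => ht x (List.mem_cons_of_mem a hx)
      _ ≤ _ := finishTime_mono _ (by linarith [ht a List.mem_cons_self])
  | cons_cons a _ ih =>
    rw [List.pairwise_cons] at hs
    refine ih hs.2 fun x hx => ?_
    linarith [ht a List.mem_cons_self, ht x (List.mem_cons_of_mem a hx), hs.1 x hx]

lemma finishTime_le_of_subperm {l s : List ℝ} (hls : l.Subperm s) (hs : s.Pairwise (· ≤ ·))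
    (hnonneg : ∀ x ∈ s, 0 ≤ x) : finishTime 0 l ≤ finishTime 0 s :=
  (finishTime_le_insertionSort l 0).trans <| finishTime_le_of_sublist
    (List.sublist_of_subperm_of_pairwise ((List.perm_insertionSort _ l).subperm.trans hls)
      (List.pairwise_insertionSort _ l) hs) hs hnonneg

lemma PTInclusive.listFeasible {q : List ℝ} (hq : PTInclusive q) (hnonneg : ∀ x ∈ q, 0 ≤ x) :
    ListFeasible q := by
  obtain ⟨s, hsq, hsorted, hbound⟩ := hq
  intro i hi
  obtain ⟨s₀, s, rfl⟩ := List.exists_cons_of_length_pos (hsq.length_eq ▸ (i.zero_le.trans_lt hi))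
  have hlen : q.length = s.length + 1 := by simp [← hsq.length_eq]
  have hs_tail : finishTime 0 s < s₀ := by
    simpa [finishTime_zero_eq_sum] using hbound
  have hqi_mem : q.getD i 0 ∈ q := List.getD_eq_getElem _ _ hi ▸ List.getElem_mem hi
  have hs₀_le : s₀ ≤ q.getD i 0 := by
    rcases List.mem_cons.mp (hsq.mem_iff.mpr hqi_mem) with h | h
    · exact h.ge
    · exact List.rel_of_pairwise_cons hsorted h
  have hkey := finishTime_le_of_subperm
    ((List.cons_getD_take_subperm q 0 hi).trans hsq.symm.subperm) hsorted
    fun x hx => hnonneg x (hsq.subset hx)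
  rw [finishTime_cons, finishTime_cons, finishTime_eq_add, finishTime_eq_add (_ / 2),
    ← tseq_eq_finishTime_take q hi.le, List.length_take_of_le hi.le, zero_add, zero_add] at hkey
  have hpow : (2 : ℝ) ^ i ≤ 2 ^ s.length := pow_le_pow_right₀ one_le_two (by omega)
  have hqi : q.getD i 0 / 2 / 2 ^ s.length ≤ q.getD i 0 / 2 / 2 ^ i :=
    div_le_div_of_nonneg_left (by linarith [hnonneg _ hqi_mem]) (by positivity) hpow
  have hs₀ : s₀ / 2 / 2 ^ s.length ≤ q.getD i 0 / 2 / 2 ^ s.length := by gcongr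
  linarith

lemma PTInclusive.of_perm {q q' : List ℝ} (h : PTInclusive q) (hq : q.Perm q') :
    PTInclusive q' :=
  let ⟨s, hs, hsorted, hbound⟩ := h
  ⟨s, hs.trans hq, hsorted, hbound⟩

lemma tseq_congr_of_getD_eq {q q' : List ℝ} {n : ℕ} (h : ∀ ℓ < n, q.getD ℓ 0 = q'.getD ℓ 0) :
    Tseq q n = Tseq q' n := by
  induction n with
  | zero => rfl
  | succ n ih => rw [Tseq, Tseq, ih fun ℓ hℓ => h ℓ (by omega), h n n.lt_succ_self]

lemma tseq_sub_tseq_of_getD_eq {q q' : List ℝ} {j : ℕ}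
    (h : ∀ ℓ, j ≤ ℓ → q.getD ℓ 0 = q'.getD ℓ 0) {n : ℕ} (hjn : j ≤ n) :
    Tseq q' n - Tseq q n = (Tseq q' j - Tseq q j) / 2 ^ (n - j) := by
  induction n, hjn using Nat.le_induction with
  | base => simp
  | succ n hjn ih =>
    rw [Tseq, Tseq, h n hjn, Nat.sub_add_comm hjn, pow_succ, ← div_div, ← ih]
    ring

lemma tseq_append_cons_cons_comm_of_le (A B : List ℝ) (a b : ℝ) {ℓ : ℕ} (hℓ : ℓ ≤ A.length) :
    Tseq (A ++ b :: a :: B) ℓ = Tseq (A ++ a :: b :: B) ℓ :=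
  tseq_congr_of_getD_eq fun n hn => (List.getD_append_cons_cons_comm (by omega) (by omega)).symm

lemma tseq_append_cons_cons_comm_add (A B : List ℝ) (a b : ℝ) (r : ℕ) :
    Tseq (A ++ b :: a :: B) (A.length + 2 + r)
      = Tseq (A ++ a :: b :: B) (A.length + 2 + r) + (a - b) / 2 ^ (r + 2) := by
  have hshift := tseq_sub_tseq_of_getD_eq (q := A ++ a :: b :: B) (q' := A ++ b :: a :: B)
    (j := A.length + 2) (fun ℓ hℓ => List.getD_append_cons_cons_comm (by omega) (by omega))
    (Nat.le_add_right _ r)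
  rw [Nat.add_sub_cancel_left, Tseq, Tseq, Tseq, Tseq,
    tseq_append_cons_cons_comm_of_le A B a b le_rfl] at hshift
  simp only [List.getD_append_cons_cons_of_length_eq rfl,
    List.getD_append_cons_cons_of_length_add_one_eq rfl] at hshift
  rw [pow_add]
  linear_combination hshift

lemma listOverlap_sub_listOverlap_swap (A B C D : List ℝ) (a b c d : ℝ)
    (hCA : C.length = A.length) :
    listOverlap (A ++ a :: b :: B) (C ++ c :: d :: D)
        - listOverlap (A ++ b :: a :: B) (C ++ d :: c :: D)
      = (d - c) * Tseq (A ++ a :: b :: B) A.length / 4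
        + (a - b) * ∑ ℓ ∈ Finset.Ico (A.length + 2) (A ++ a :: b :: B).length,
            (C ++ c :: d :: D).getD ℓ 0 / 2 ^ (ℓ + 1 - A.length)
        + (c * b - d * a) / 4 := by
  have hlen (a b : ℝ) : (A ++ a :: b :: B).length = A.length + 2 + B.length := by simp; omega
  rw [listOverlap, listOverlap, hlen, hlen]
  simp only [Finset.sum_range_add, Finset.sum_range_succ]
  rw [Tseq, Tseq, tseq_append_cons_cons_comm_of_le A B a b le_rfl]
  simp only [List.getD_append_cons_cons_of_length_eq rfl,
    List.getD_append_cons_cons_of_length_eq hCA, List.getD_append_cons_cons_of_length_add_one_eq rfl,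
    List.getD_append_cons_cons_of_length_add_one_eq (congrArg (· + 1) hCA)]
  set q := A ++ a :: b :: B
  set q' := A ++ b :: a :: B
  set v := C ++ c :: d :: D
  set v' := C ++ d :: c :: D
  set i := A.length
  have hq (ℓ : ℕ) (h₀ : ℓ ≠ i) (h₁ : ℓ ≠ i + 1) : q.getD ℓ 0 = q'.getD ℓ 0 :=
    List.getD_append_cons_cons_comm h₀ h₁
  have hv (ℓ : ℕ) (h₀ : ℓ ≠ i) (h₁ : ℓ ≠ i + 1) : v.getD ℓ 0 = v'.getD ℓ 0 :=
    List.getD_append_cons_cons_comm (hCA ▸ h₀) (hCA ▸ h₁)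
  have hprefix : ∑ ℓ ∈ Finset.range i, v'.getD ℓ 0 * (q'.getD ℓ 0 - Tseq q' ℓ) / 2
      = ∑ ℓ ∈ Finset.range i, v.getD ℓ 0 * (q.getD ℓ 0 - Tseq q ℓ) / 2 := by
    refine Finset.sum_congr rfl fun ℓ hℓ => ?_
    have hℓ : ℓ < i := Finset.mem_range.mp hℓ
    rw [hq ℓ (by omega) (by omega), hv ℓ (by omega) (by omega),
      tseq_append_cons_cons_comm_of_le A B a b hℓ.le]
  have hsuffix : ∑ r ∈ Finset.range B.length,
        (v.getD (i + 2 + r) 0 * (q.getD (i + 2 + r) 0 - Tseq q (i + 2 + r)) / 2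
          - v'.getD (i + 2 + r) 0 * (q'.getD (i + 2 + r) 0 - Tseq q' (i + 2 + r)) / 2)
      = (a - b) * ∑ ℓ ∈ Finset.Ico (i + 2) (i + 2 + B.length), v.getD ℓ 0 / 2 ^ (ℓ + 1 - i) := by
    rw [Finset.sum_Ico_eq_sum_range, Nat.add_sub_cancel_left, Finset.mul_sum]
    refine Finset.sum_congr rfl fun r _ => ?_
    rw [hq _ (by omega) (by omega), hv _ (by omega) (by omega), tseq_append_cons_cons_comm_add,
      show i + 2 + r + 1 - i = r + 2 + 1 by omega, pow_succ]
    field_simp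
    ring
  rw [Finset.sum_sub_distrib] at hsuffix
  linear_combination hsuffix - hprefix

namespace SyncSchedule

variable {J : Type} {m : ℕ}

lemma mem_update_seq_iff {S : SyncSchedule J m} {M : Fin m} {l : List J}
    (hl : l.Perm (S.seq M)) (r : Fin m) (j : J) :
    j ∈ Function.update S.seq M l r ↔ j ∈ S.seq r := by
  rcases eq_or_ne r M with rfl | hr
  · rw [Function.update_self]
    exact hl.mem_iff
  · rw [Function.update_of_ne hr]

def replaceSeq (S : SyncSchedule J m) (M : Fin m) (l : List J) (hl : l.Perm (S.seq M)) :
    SyncSchedule J m where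
  seq := Function.update S.seq M l
  nodup r := by
    rcases eq_or_ne r M with rfl | hr
    · rw [Function.update_self]
      exact hl.nodup_iff.mpr (S.nodup r)
    · rw [Function.update_of_ne hr]
      exact S.nodup r
  disj r r' j hj hj' :=
    S.disj r r' j ((mem_update_seq_iff hl r j).mp hj) ((mem_update_seq_iff hl r' j).mp hj')

variable {S : SyncSchedule J m} {M : Fin m} {l : List J} (hl : l.Perm (S.seq M))

@[simp]
lemma replaceSeq_seq_self : (S.replaceSeq M l hl).seq M = l := by
  simp [replaceSeq]

lemma replaceSeq_seq_of_ne {r : Fin m} (hr : r ≠ M) : (S.replaceSeq M l hl).seq r = S.seq r := by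
  simp [replaceSeq, hr]

lemma Feasible.replaceSeq {p : J → ℝ} (hS : S.Feasible p) (hlp : ListFeasible (l.map p)) :
    (S.replaceSeq M l hl).Feasible p := by
  intro r
  rcases eq_or_ne r M with rfl | hr
  · rwa [replaceSeq_seq_self]
  · rw [replaceSeq_seq_of_ne hl hr]
    exact hS r

lemma omega_sub_omega_replaceSeq (p w : J → ℝ) :
    S.Omega p w - (S.replaceSeq M l hl).Omega p w
      = listOverlap ((S.seq M).map p) ((S.seq M).map w) - listOverlap (l.map p) (l.map w) := by
  rw [Omega, Omega, ← Finset.sum_sub_distrib, Fintype.sum_eq_single M fun r hr => by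
    rw [replaceSeq_seq_of_ne hl hr, sub_self], replaceSeq_seq_self]

end SyncSchedule

theorem exchange_consecutive_jobs_general
    {J : Type} {m : ℕ}
    (p w : J → ℝ) (hp : ∀ j, 0 < p j)
    (S : SyncSchedule J m) (hfeas : S.Feasible p)
    (M : Fin m) (js : List J) (hseq : S.seq M = js)
    (hPTI : PTInclusive (js.map p))
    (k : ℕ) (hk : js.length = k)
    (i : ℕ) (hi : i + 1 < k)
    (x y : J) (hx : js[i]? = some x) (hy : js[i + 1]? = some y) :
    ∃ S' : SyncSchedule J m,
      S'.seq M = js.take i ++ y :: x :: js.drop (i + 2) ∧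
      (∀ r : Fin m, r ≠ M → S'.seq r = S.seq r) ∧
      S'.Feasible p ∧
      S.Omega p w - S'.Omega p w
        = (w y - w x) * Tseq (js.map p) i / 4
          + (p x - p y) *
              ∑ ℓ ∈ Finset.Ico (i + 2) k, (js.map w).getD ℓ 0 / 2 ^ (ℓ + 1 - i)
          + (w x * p y - w y * p x) / 4 := by
  obtain ⟨A, B, rfl, rfl⟩ := List.exists_eq_append_cons_cons_of_getElem? hx hy
  subst hk
  have hswap : (A ++ y :: x :: B).Perm (A ++ x :: y :: B) := (List.Perm.swap x y B).append_left A
  have hperm : (A ++ y :: x :: B).Perm (S.seq M) := hseq ▸ hswap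
  have hfeas' : ListFeasible ((A ++ y :: x :: B).map p) :=
    (hPTI.of_perm (hswap.map p).symm).listFeasible
      (List.forall_mem_map.mpr fun j _ => (hp j).le)
  refine ⟨S.replaceSeq M _ hperm, ?_, fun r hr => SyncSchedule.replaceSeq_seq_of_ne hperm hr,
    hfeas.replaceSeq hperm hfeas', ?_⟩
  · simp
  · rw [SyncSchedule.omega_sub_omega_replaceSeq, hseq]
    simpa using listOverlap_sub_listOverlap_swap (A.map p) (B.map p) (A.map w) (B.map w)
      (p x) (p y) (w x) (w y) (by simp)

/-- **consecutive job exchange.** Let `S` be a feasible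
synchronized schedule executing the processing-time-inclusive jobs
`js = [j_1, …, j_k]` (0-indexed here) on shared processor `M` in this order,
let `i` be a 0-indexed position with `i + 1 < k`, and let `x = js[i]`,
`y = js[i+1]`.  Exchanging `x` and `y` yields a feasible synchronized
schedule `S'` (identical on all other processors) with
`Ω(S) - Ω(S') = (w y - w x)·T_i/4
  + (p x - p y)·Σ_{ℓ=i+2}^{k-1} w_{js ℓ}/2^(ℓ+1-i) + (w x·p y - w y·p x)/4`,
where `T_i = Tseq (js.map p) i` is computed from the original order. -/
theorem exchange_consecutive_jobs
    {J : Type} [Fintype J] [DecidableEq J] {m : ℕ} (hm : 1 ≤ m)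
    (p w : J → ℝ) (hp : ∀ j, 0 < p j) (hw : ∀ j, 0 < w j)
    (S : SyncSchedule J m) (hfeas : S.Feasible p)
    (M : Fin m) (js : List J) (hseq : S.seq M = js)
    (hPTI : PTInclusive (js.map p))
    (k : ℕ) (hk : js.length = k)
    (i : ℕ) (hi : i + 1 < k)
    (x y : J) (hx : js[i]? = some x) (hy : js[i + 1]? = some y) :
    ∃ S' : SyncSchedule J m,
      S'.seq M = js.take i ++ y :: x :: js.drop (i + 2) ∧
      (∀ r : Fin m, r ≠ M → S'.seq r = S.seq r) ∧
      S'.Feasible p ∧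
      S.Omega p w - S'.Omega p w
        = (w y - w x) * Tseq (js.map p) i / 4
          + (p x - p y) *
              ∑ ℓ ∈ Finset.Ico (i + 2) k, (js.map w).getD ℓ 0 / 2 ^ (ℓ + 1 - i)
          + (w x * p y - w y * p x) / 4 :=
  exchange_consecutive_jobs_general p w hp S hfeas M js hseq hPTI k hk i hi x y hx hy
end

section
/- Let the set of jobs J be processing-time-inclusive and satisfy p_j = w_j for every job j. Then every optimal feasible synchronized schedule for J on m shared processors is V-shaped: for each shared processor executing jobs j_1,…,j_k with processing times p_1,…,p_k in this order, there exists an index ℓ ∈ {1,…,k} such that p_1 ≥ p_2 ≥ ⋯ ≥ p_ℓ and p_ℓ ≤ p_{ℓ+1} ≤ ⋯ ≤ p_k. -/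
/-!
With `w = p`, exchanging two adjacent jobs `a, b` that start at time `τ` and are followed by
the jobs `c` changes the overlap by `(a - b) (B - τ) / 4`, where `B = Σₜ cₜ / 2^(t+1)` is the
completion time of `c` run in reverse order. Processing-time inclusiveness bounds the
completion time of any sequence of fewer than all jobs by the shortest processing time; hence
every sequence is feasible (so the exchange is admissible), optimality makes `a - b` agree in
sign with the slack `B - τ` at each position, and the slack strictly decreases along the
sequence. So the processing times never rise and later fall again.
-/

noncomputable def completionTime (q : List ℝ) : ℝ :=
  q.foldl (fun t x => (t + x) / 2) 0

lemma completionTime_append_singleton (q : List ℝ) (x : ℝ) :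
    completionTime (q ++ [x]) = (completionTime q + x) / 2 := by
  simp [completionTime]

lemma completionTime_reverse_cons (x : ℝ) (c : List ℝ) :
    completionTime (x :: c).reverse = (completionTime c.reverse + x) / 2 := by
  rw [List.reverse_cons, completionTime_append_singleton]

lemma completionTime_eq_sum (q : List ℝ) :
    completionTime q = ∑ i ∈ Finset.range q.length, q.getD i 0 / 2 ^ (q.length - i) := by
  induction q using List.reverseRecOn with
  | nil => simp [completionTime]
  | append_singleton q x ih =>
    rw [completionTime_append_singleton, ih, List.length_append, List.length_singleton,
      Finset.sum_range_succ, List.getD_append_right _ _ _ _ le_rfl, Nat.sub_self,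
      Nat.add_sub_cancel_left, add_div, Finset.sum_div]
    congr 1
    refine Finset.sum_congr rfl fun i hi => ?_
    rw [List.getD_append _ _ _ _ (Finset.mem_range.1 hi),
      Nat.sub_add_comm (Finset.mem_range.1 hi).le, pow_succ, div_div]
    simp

lemma completionTime_reverse_eq_sum (c : List ℝ) :
    completionTime c.reverse =
      ∑ t ∈ Finset.range c.length, (2⁻¹ : ℝ) ^ (t + 1) * c.getD t 0 := by
  induction c with
  | nil => simp [completionTime]
  | cons x c ih =>
    rw [completionTime_reverse_cons, ih, List.length_cons, Finset.sum_range_succ',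
      add_div, Finset.sum_div]
    simp only [List.getD_cons_succ, List.getD_cons_zero, pow_succ]
    congr 1
    · exact Finset.sum_congr rfl fun _ _ => by ring
    · ring

lemma Tseq_append (A B : List ℝ) : ∀ i ≤ A.length, Tseq (A ++ B) i = Tseq A i
  | 0, _ => rfl
  | i + 1, h => by
    rw [Tseq, Tseq, Tseq_append A B i (Nat.le_of_succ_le h), List.getD_append _ _ _ _ h]

lemma Tseq_length (q : List ℝ) : Tseq q q.length = completionTime q := by
  induction q using List.reverseRecOn with
  | nil => rfl
  | append_singleton q x ih =>
    rw [List.length_append, List.length_singleton, Tseq, Tseq_append q [x] _ le_rfl, ih,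
      List.getD_append_right _ _ _ _ le_rfl, Nat.sub_self, completionTime_append_singleton]
    rfl

lemma Tseq_eq_completionTime_take (q : List ℝ) {i : ℕ} (hi : i ≤ q.length) :
    Tseq q i = completionTime (q.take i) := by
  conv_lhs => rw [← List.take_append_drop i q]
  rw [Tseq_append (q.take i) (q.drop i) i (List.length_take_of_le hi).ge]
  simpa [List.length_take_of_le hi] using Tseq_length (q.take i)

lemma sum_range_getD_eq_sum_take {M : Type*} [AddCommMonoid M] (l : List M) (u : ℕ) :
    ∑ i ∈ Finset.range u, l.getD i 0 = (l.take u).sum := by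
  induction u with
  | zero => simp
  | succ u ih =>
    rw [Finset.sum_range_succ, ih, List.take_add_one, List.sum_append, List.getD_eq_getElem?_getD]
    cases l[u]? with
    | none => simp
    | some x => simp

lemma sum_mul_le_sum_mul_of_sum_range_le {R : Type*} [Ring R] [PartialOrder R]
    [IsOrderedRing R] {c v w : ℕ → R} {n : ℕ} (hc : Antitone c)
    (hc0 : ∀ i, 0 ≤ c i) (h : ∀ u ≤ n, ∑ i ∈ Finset.range u, v i ≤ ∑ i ∈ Finset.range u, w i) :
    ∑ i ∈ Finset.range n, c i * v i ≤ ∑ i ∈ Finset.range n, c i * w i := by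
  have hv := Finset.sum_range_by_parts c v n
  have hw := Finset.sum_range_by_parts c w n
  simp only [smul_eq_mul] at hv hw
  rw [hv, hw]
  refine sub_le_sub (mul_le_mul_of_nonneg_left (h n le_rfl) (hc0 _))
    (Finset.sum_le_sum fun i hi => ?_)
  exact mul_le_mul_of_nonpos_left (h _ (by simp at hi; omega))
    (sub_nonpos.2 (hc (Nat.le_succ i)))

lemma completionTime_reverse_le_of_sum_take_le {v w : List ℝ} (hlen : v.length ≤ w.length)
    (hw : ∀ x ∈ w, 0 ≤ x) (h : ∀ u ≤ v.length, (v.take u).sum ≤ (w.take u).sum) :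
    completionTime v.reverse ≤ completionTime w.reverse := by
  rw [completionTime_reverse_eq_sum, completionTime_reverse_eq_sum]
  calc ∑ t ∈ Finset.range v.length, (2⁻¹ : ℝ) ^ (t + 1) * v.getD t 0
      ≤ ∑ t ∈ Finset.range v.length, (2⁻¹ : ℝ) ^ (t + 1) * w.getD t 0 := by
        refine sum_mul_le_sum_mul_of_sum_range_le
          (fun a b hab => pow_le_pow_of_le_one (by norm_num) (by norm_num) (by omega))
          (fun _ => by positivity) fun u hu => ?_
        simpa only [sum_range_getD_eq_sum_take] using h u hu
    _ ≤ ∑ t ∈ Finset.range w.length, (2⁻¹ : ℝ) ^ (t + 1) * w.getD t 0 := by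
        refine Finset.sum_le_sum_of_subset_of_nonneg (Finset.range_subset_range.2 hlen)
          fun t ht _ => mul_nonneg (by positivity) ?_
        rw [List.getD_eq_getElem _ _ (Finset.mem_range.1 ht)]
        exact hw _ (List.getElem_mem _)

lemma List.Subperm.sum_le_sum_drop {α : Type*} [AddCommMonoid α] [LinearOrder α]
    [IsOrderedAddMonoid α] {s t : List α} (hs : s.Pairwise (· ≤ ·)) (ht : t.Subperm s) :
    t.sum ≤ (s.drop (s.length - t.length)).sum := by
  induction s generalizing t with
  | nil => simp [List.subperm_nil.1 ht]
  | cons a s ih =>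
    rw [List.pairwise_cons] at hs
    have hle : t.length ≤ s.length + 1 := ht.length_le
    by_cases ha : a ∈ t
    · have hpos : 0 < t.length := List.length_pos_of_mem ha
      have ih' := ih hs.2 (by simpa using ht.erase a)
      rw [List.length_erase_of_mem ha] at ih'
      rw [← List.sum_erase ha, List.length_cons]
      rcases Nat.lt_or_ge s.length t.length with hst | hst
      · rw [show s.length - (t.length - 1) = 0 by omega, List.drop_zero] at ih'
        rw [show s.length + 1 - t.length = 0 by omega, List.drop_zero, List.sum_cons]
        exact add_le_add le_rfl ih'
      · rw [show s.length - (t.length - 1) = s.length - t.length + 1 by omega] at ih'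
        rw [show s.length + 1 - t.length = s.length - t.length + 1 by omega,
          List.drop_succ_cons, List.drop_eq_getElem_cons (by omega), List.sum_cons]
        exact add_le_add (hs.1 _ (List.getElem_mem _)) ih'
    · have hsub : t.Subperm s := by simpa [List.erase_of_not_mem ha] using ht.erase a
      have hst := hsub.length_le
      rw [List.length_cons, show s.length + 1 - t.length = s.length - t.length + 1 by omega,
        List.drop_succ_cons]
      exact ih hs.2 hsub

section PTInclusive

variable {J : Type} [Fintype J] {p : J → ℝ}

/-- Among sequences of fewer than all jobs, the ascending order of all but the shortest job
finishes last: its reversed prefix sums dominate, and summation by parts does the rest. -/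
theorem PTInclusive.completionTime_lt (hp : ∀ j, 0 < p j)
    (hPTI : PTInclusive (Finset.univ.toList.map p)) {l : List J} (hl : l.Nodup)
    (hlen : l.length < Fintype.card J) (j : J) : completionTime (l.map p) < p j := by
  obtain ⟨s, hperm, hsort, hsum⟩ := hPTI
  have hslen : s.length = Fintype.card J := by simp [hperm.length_eq]
  have hmem : ∀ x, x ∈ s ↔ ∃ j, p j = x := by simp [hperm.mem_iff]
  obtain ⟨s₀, t, rfl⟩ : ∃ s₀ t, s = s₀ :: t :=
    List.exists_cons_of_ne_nil (by rintro rfl; simp at hslen; omega)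
  have hmin : s₀ ≤ p j := by
    rcases List.mem_cons.1 ((hmem _).2 ⟨j, rfl⟩) with h | h
    · exact h.symm.le
    · exact (List.pairwise_cons.1 hsort).1 _ h
  have ht : completionTime t < s₀ := by
    simpa [completionTime_eq_sum] using hsum
  have hsub : ∀ l' : List J, l'.Nodup → (l'.map p).Subperm (s₀ :: t) := fun l' hl' => by
    obtain ⟨k, hk, hks⟩ := hl'.subperm fun j _ => Finset.mem_toList.2 (Finset.mem_univ j)
    exact List.Subperm.trans ⟨k.map p, hk.map p, hks.map p⟩ hperm.symm.subperm
  have ht0 : ∀ x ∈ t, 0 ≤ x := fun x hx => by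
    obtain ⟨j', rfl⟩ := (hmem x).1 (List.mem_cons_of_mem _ hx)
    exact (hp j').le
  have hlt : l.length ≤ t.length := by simp at hslen; omega
  have hmaj : completionTime (l.map p) ≤ completionTime t := by
    rw [← List.reverse_reverse (l.map p), ← List.map_reverse]
    conv_rhs => rw [← List.reverse_reverse t]
    refine completionTime_reverse_le_of_sum_take_le (by simpa using hlt) (by simpa using ht0)
      fun u hu => ?_
    have hu' : u ≤ t.length := by simp at hu; omega
    rw [← List.map_take, List.take_reverse (xs := t), List.sum_reverse]
    calc ((l.reverse.take u).map p).sum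
        ≤ ((s₀ :: t).drop ((s₀ :: t).length - ((l.reverse.take u).map p).length)).sum :=
          List.Subperm.sum_le_sum_drop hsort
            (hsub _ ((List.nodup_reverse.2 hl).sublist (List.take_sublist _ _)))
      _ = (t.drop (t.length - u)).sum := by
          rw [List.length_map, List.length_take_of_le (by simpa using hu), List.length_cons,
            show t.length + 1 - u = t.length - u + 1 by omega, List.drop_succ_cons]
  exact (hmaj.trans_lt ht).trans_le hmin

theorem PTInclusive.listFeasible_s11 (hp : ∀ j, 0 < p j)
    (hPTI : PTInclusive (Finset.univ.toList.map p)) {l : List J} (hl : l.Nodup) :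
    ListFeasible (l.map p) := by
  intro i hi
  rw [List.length_map] at hi
  rw [Tseq_eq_completionTime_take _ (by simp; omega), ← List.map_take,
    List.getD_eq_getElem _ _ (by simpa using hi), List.getElem_map]
  refine hPTI.completionTime_lt hp (hl.sublist (List.take_sublist _ _)) ?_ _
  rw [List.length_take_of_le hi.le]
  exact hi.trans_le hl.length_le_card

end PTInclusive

lemma listOverlap_append_singleton (q : List ℝ) (x : ℝ) :
    listOverlap (q ++ [x]) (q ++ [x]) = listOverlap q q + x * (x - completionTime q) / 2 := by
  unfold listOverlap
  rw [List.length_append, List.length_singleton, Finset.sum_range_succ,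
    List.getD_append_right _ _ _ _ le_rfl, Nat.sub_self, Tseq_append q [x] _ le_rfl, Tseq_length,
    List.getD_cons_zero]
  congr 1
  refine Finset.sum_congr rfl fun i hi => ?_
  rw [List.getD_append _ _ _ _ (Finset.mem_range.1 hi),
    Tseq_append q [x] i (Finset.mem_range.1 hi).le]

/-- The overlap, with weights equal to processing times, of the jobs `c` on a shared processor
that becomes free at time `τ`. -/
noncomputable def overlapFrom : ℝ → List ℝ → ℝ
  | _, [] => 0
  | τ, x :: c => x * (x - τ) / 2 + overlapFrom ((τ + x) / 2) c

lemma listOverlap_append (A C : List ℝ) :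
    listOverlap (A ++ C) (A ++ C) = listOverlap A A + overlapFrom (completionTime A) C := by
  induction C generalizing A with
  | nil => simp [overlapFrom]
  | cons x C ih =>
    rw [← List.singleton_append, ← List.append_assoc, ih, listOverlap_append_singleton,
      completionTime_append_singleton, add_assoc]
    rfl

lemma overlapFrom_sub (τ τ' : ℝ) (c : List ℝ) :
    overlapFrom τ c - overlapFrom τ' c = (τ' - τ) * completionTime c.reverse := by
  induction c generalizing τ τ' with
  | nil => simp [overlapFrom, completionTime]
  | cons x c ih =>
    have := ih ((τ + x) / 2) ((τ' + x) / 2)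
    rw [overlapFrom, overlapFrom, completionTime_reverse_cons]
    linear_combination this

lemma overlapFrom_swap (τ a b : ℝ) (c : List ℝ) :
    overlapFrom τ (a :: b :: c) - overlapFrom τ (b :: a :: c)
      = (a - b) * (completionTime c.reverse - τ) / 4 := by
  have := overlapFrom_sub (((τ + a) / 2 + b) / 2) (((τ + b) / 2 + a) / 2) c
  simp only [overlapFrom]
  linear_combination this

lemma listOverlap_sub_swap (A C : List ℝ) (a b : ℝ) :
    listOverlap (A ++ a :: b :: C) (A ++ a :: b :: C)
        - listOverlap (A ++ b :: a :: C) (A ++ b :: a :: C)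
      = (a - b) * (completionTime C.reverse - completionTime A) / 4 := by
  rw [listOverlap_append, listOverlap_append, ← overlapFrom_swap]
  ring

/-- Exchanging the jobs at positions `j` and `j + 1` of `q` changes the overlap by
`(q[j + 1] - q[j]) * swapSlack q j / 4` (see `listOverlap_sub_swap`). -/
noncomputable def swapSlack (q : List ℝ) (j : ℕ) : ℝ :=
  completionTime (q.drop (j + 2)).reverse - completionTime (q.take j)

lemma swapSlack_succ_lt {q : List ℝ} {j : ℕ} (hj : j + 2 < q.length)
    (htail : completionTime (q.drop (j + 3)).reverse < q[j + 2])
    (hhead : completionTime (q.take j) < q[j]) : swapSlack q (j + 1) < swapSlack q j := by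
  unfold swapSlack
  rw [List.drop_eq_getElem_cons hj, completionTime_reverse_cons,
    ← List.take_concat_get' q j (by omega), completionTime_append_singleton]
  linarith

namespace SyncSchedule

variable {J : Type} {m : ℕ}

def updateSeq (S : SyncSchedule J m) (r : Fin m) (L : List J) (hL : L.Perm (S.seq r)) :
    SyncSchedule J m where
  seq := Function.update S.seq r L
  nodup i := by
    rcases eq_or_ne i r with rfl | hi
    · simpa using hL.nodup_iff.2 (S.nodup i)
    · simpa [hi] using S.nodup i
  disj i i' j := by
    have hmem : ∀ k, j ∈ Function.update S.seq r L k → j ∈ S.seq k := fun k hk => by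
      rcases eq_or_ne k r with rfl | hk'
      · exact hL.subset (by simpa using hk)
      · simpa [hk'] using hk
    exact fun h h' => S.disj i i' j (hmem i h) (hmem i' h')

theorem Optimal.listOverlap_le_of_perm {p w : J → ℝ} {S : SyncSchedule J m}
    (hopt : S.Optimal p w) {r : Fin m} {L : List J} (hL : L.Perm (S.seq r))
    (hfeas : ListFeasible (L.map p)) :
    listOverlap (L.map p) (L.map w) ≤ listOverlap ((S.seq r).map p) ((S.seq r).map w) := by
  have hfeas' : (S.updateSeq r L hL).Feasible p := fun i => by
    rcases eq_or_ne i r with rfl | hi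
    · simpa [updateSeq] using hfeas
    · simpa [updateSeq, hi] using hopt.1 i
  have hrest : ∀ i ∈ Finset.univ.erase r, (S.updateSeq r L hL).seq i = S.seq i :=
    fun i hi => Function.update_of_ne (Finset.ne_of_mem_erase hi) _ _
  have h := hopt.2 _ hfeas'
  unfold Omega at h
  rw [← Finset.add_sum_erase _ _ (Finset.mem_univ r),
    ← Finset.add_sum_erase _ _ (Finset.mem_univ r),
    Finset.sum_congr rfl fun i hi => by rw [hrest i hi]] at h
  simp only [updateSeq, Function.update_self] at h
  linarith

theorem Optimal.sub_mul_nonneg_of_eq_append {p : J → ℝ} {S : SyncSchedule J m}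
    (hopt : S.Optimal p p) (hfeas : ∀ l : List J, l.Nodup → ListFeasible (l.map p))
    {r : Fin m} {A C : List J} {x y : J} (hL : S.seq r = A ++ x :: y :: C) :
    0 ≤ (p x - p y) * (completionTime (C.map p).reverse - completionTime (A.map p)) := by
  have hperm : (A ++ y :: x :: C).Perm (S.seq r) := hL ▸ (List.Perm.swap x y C).append_left A
  have h := hopt.listOverlap_le_of_perm hperm (hfeas _ (hperm.nodup_iff.2 (S.nodup r)))
  rw [hL] at h
  have := listOverlap_sub_swap (A.map p) (C.map p) (p x) (p y)
  simp only [List.map_append, List.map_cons] at h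
  linarith

theorem Optimal.sub_mul_swapSlack_nonneg {p : J → ℝ} {S : SyncSchedule J m}
    (hopt : S.Optimal p p)
    (hfeas : ∀ l : List J, l.Nodup → ListFeasible (l.map p)) {r : Fin m} {j : ℕ}
    (hj : j + 1 < (S.seq r).length) :
    0 ≤ (((S.seq r).map p).getD j 0 - ((S.seq r).map p).getD (j + 1) 0)
      * swapSlack ((S.seq r).map p) j := by
  have hdec : S.seq r = (S.seq r).take j ++ (S.seq r)[j] :: (S.seq r)[j + 1] ::
      (S.seq r).drop (j + 2) := by
    conv_lhs => rw [← List.take_append_drop j (S.seq r), List.drop_eq_getElem_cons (by omega),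
      List.drop_eq_getElem_cons hj]
  have := hopt.sub_mul_nonneg_of_eq_append hfeas hdec
  rwa [List.getD_eq_getElem _ _ (by simp; omega), List.getD_eq_getElem _ _ (by simpa using hj),
    List.getElem_map, List.getElem_map, swapSlack, ← List.map_drop, ← List.map_take]

end SyncSchedule

lemma le_of_forall_le_succ {α : Type*} [Preorder α] {f : ℕ → α} {lo hi : ℕ}
    (h : ∀ i, lo ≤ i → i < hi → f i ≤ f (i + 1)) {a b : ℕ} (ha : lo ≤ a) (hab : a ≤ b)
    (hb : b ≤ hi) : f a ≤ f b := by
  induction b, hab using Nat.le_induction with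
  | base => exact le_rfl
  | succ b hab ih => exact (ih (by omega)).trans (h b (by omega) (by omega))

theorem exists_vShape_of_sign {f g : ℕ → ℝ} {n : ℕ} (hn : 0 < n)
    (hsign : ∀ j, j + 1 < n → 0 ≤ (f j - f (j + 1)) * g j)
    (hg : ∀ j, j + 2 < n → g (j + 1) < g j) :
    ∃ ℓ < n, (∀ a b, a ≤ b → b ≤ ℓ → f b ≤ f a) ∧
      (∀ a b, ℓ ≤ a → a ≤ b → b < n → f a ≤ f b) := by
  have hnoPeak : ∀ i j, i < j → j + 1 < n → f i < f (i + 1) → f (j + 1) < f j → False := by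
    intro i j hij hj hasc hdesc
    have hgi : g i ≤ 0 := nonpos_of_mul_nonneg_right (hsign i (by omega)) (by linarith)
    have hgj : 0 ≤ g j := nonneg_of_mul_nonneg_right (hsign j hj) (by linarith)
    have hgij : g j ≤ g (i + 1) :=
      le_of_forall_le_succ (α := ℝᵒᵈ) (a := i + 1) (b := j) (hi := n - 2)
        (fun k _ hk => (hg k (by omega)).le) le_rfl hij (by omega)
    linarith [hg i (by omega)]
  classical
  let P : ℕ → Prop := fun k => ∀ j, k ≤ j → j + 1 < n → f j ≤ f (j + 1)
  have hPn : P (n - 1) := fun j hj hjn => by omega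
  have hP : ∃ k, P k := ⟨n - 1, hPn⟩
  refine ⟨Nat.find hP, (Nat.find_min' hP hPn).trans_lt (by omega), ?_,
    fun a b ha hab hb => le_of_forall_le_succ (hi := n - 1)
      (fun i hi hin => Nat.find_spec hP i hi (by omega)) ha hab (by omega)⟩
  refine fun a b hab hb => le_of_forall_le_succ (α := ℝᵒᵈ) (lo := 0) (hi := Nat.find hP)
    (fun i _ hi => ?_) (Nat.zero_le a) hab hb
  by_contra hasc
  obtain ⟨j, hij, hjn, hdesc⟩ : ∃ j, i ≤ j ∧ j + 1 < n ∧ f (j + 1) < f j := by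
    simpa [P] using Nat.find_min hP hi
  rcases hij.eq_or_lt with rfl | hij
  · exact hasc hdesc.le
  · exact hnoPeak i j hij hjn (not_le.1 hasc) hdesc

theorem optimal_is_V_shaped_general
    {J : Type} [Fintype J] {m : ℕ}
    (p w : J → ℝ) (hp : ∀ j, 0 < p j) (hpw : ∀ j, p j = w j)
    (hPTI : PTInclusive (Finset.univ.toList.map p))
    (S : SyncSchedule J m) (hopt : S.Optimal p w) :
    ∀ r : Fin m, (S.seq r) ≠ [] →
      ∃ ℓ < (S.seq r).length,
        (∀ a b, a ≤ b → b ≤ ℓ →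
          ((S.seq r).map p).getD b 0 ≤ ((S.seq r).map p).getD a 0) ∧
        (∀ a b, ℓ ≤ a → a ≤ b → b < (S.seq r).length →
          ((S.seq r).map p).getD a 0 ≤ ((S.seq r).map p).getD b 0) := by
  intro r hne
  obtain rfl : w = p := funext fun j => (hpw j).symm
  have hcard : (S.seq r).length ≤ Fintype.card J := (S.nodup r).length_le_card
  refine exists_vShape_of_sign (List.length_pos_iff.2 hne)
    (fun j hj => hopt.sub_mul_swapSlack_nonneg (fun l hl => hPTI.listFeasible_s11 hp hl) hj)
    fun j hj => swapSlack_succ_lt (by simpa using hj) ?_ ?_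
  · rw [← List.map_drop, ← List.map_reverse, List.getElem_map]
    exact hPTI.completionTime_lt hp
      (List.nodup_reverse.2 ((S.nodup r).sublist (List.drop_sublist _ _))) (by simp; omega) _
  · rw [← List.map_take, List.getElem_map]
    exact hPTI.completionTime_lt hp ((S.nodup r).sublist (List.take_sublist _ _))
      (by simp; omega) _

/-- **V-shapeness.** If the whole set of jobs is
processing-time-inclusive and `p_j = w_j` for every job, then every optimal
feasible synchronized schedule is V-shaped: on each shared processor executing
jobs `j_1, …, j_k` (here 0-indexed, with processing times read off the
sequence) there is an index `ℓ` such that the processing times are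
non-increasing up to position `ℓ` and non-decreasing from position `ℓ` on. -/
theorem optimal_is_V_shaped
    {J : Type} [Fintype J] [DecidableEq J] {m : ℕ} (hm : 1 ≤ m)
    (p w : J → ℝ) (hp : ∀ j, 0 < p j) (hpw : ∀ j, p j = w j)
    (hPTI : PTInclusive (Finset.univ.toList.map p))
    (S : SyncSchedule J m) (hopt : S.Optimal p w) :
    ∀ r : Fin m, (S.seq r) ≠ [] →
      ∃ ℓ < (S.seq r).length,
        (∀ a b, a ≤ b → b ≤ ℓ →
          ((S.seq r).map p).getD b 0 ≤ ((S.seq r).map p).getD a 0) ∧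
        (∀ a b, ℓ ≤ a → a ≤ b → b < (S.seq r).length →
          ((S.seq r).map p).getD a 0 ≤ ((S.seq r).map p).getD b 0) :=
  optimal_is_V_shaped_general p w hp hpw hPTI S hopt
end

section
/- Let S be a feasible synchronized schedule that executes jobs j_1,…,j_k with processing times p_1,…,p_k and weights w_1,…,w_k on a single shared processor in this order. Then the total weighted overlap of S equals (1/2)·Σ_{ℓ=1}^{k} p_ℓ w_ℓ − Σ_{ℓ=1}^{k} Σ_{t=1}^{ℓ−1} p_t w_ℓ/2^{ℓ+1−t}. -/
theorem Tseq_eq_sum (q : List ℝ) : ∀ ℓ, Tseq q ℓ = ∑ t ∈ Finset.range ℓ, q.getD t 0 / 2 ^ (ℓ - t) := by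
  intro ℓ
  induction ℓ with
  | zero => simp [Tseq]
  | succ n ih =>
      rw [show Tseq q (n+1) = (Tseq q n + q.getD n 0) / 2 from rfl, ih,
        Finset.sum_range_succ]
      have h1 : ∀ t ∈ Finset.range n,
          q.getD t 0 / 2 ^ (n + 1 - t) = (q.getD t 0 / 2 ^ (n - t)) / 2 := by
        intro t ht
        have ht' : t < n := Finset.mem_range.mp ht
        have : n + 1 - t = (n - t) + 1 := by omega
        rw [this, pow_succ]
        ring
      rw [Finset.sum_congr rfl h1, ← Finset.sum_div]
      simp
      ring

/-- **matrix form of the total weighted overlap.** For a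
feasible synchronized schedule executing jobs with processing times
`q = [p_1, …, p_k]` and weights `v = [w_1, …, w_k]` on a single shared
processor in this order, the total weighted overlap equals
`(1/2)·Σ_ℓ p_ℓ w_ℓ − Σ_ℓ Σ_{t<ℓ} p_t w_ℓ / 2^(ℓ+1−t)` (1-indexed; in the
0-indexed form below the exponent `ℓ+1−t` becomes `ℓ+1−t` as well). -/
theorem overlap_eq_matrix_form
    (q v : List ℝ) (k : ℕ) (hq : q.length = k) (hv : v.length = k)
    (hqpos : ∀ a ∈ q, (0:ℝ) < a) (hvpos : ∀ a ∈ v, (0:ℝ) < a)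
    (hfeas : ListFeasible q) :
    listOverlap q v
      = (1 / 2) * ∑ ℓ ∈ Finset.range k, q.getD ℓ 0 * v.getD ℓ 0
        - ∑ ℓ ∈ Finset.range k, ∑ t ∈ Finset.range ℓ,
            q.getD t 0 * v.getD ℓ 0 / 2 ^ (ℓ + 1 - t) := by
  subst hq
  unfold listOverlap
  rw [eq_sub_iff_add_eq, Finset.mul_sum, ← Finset.sum_add_distrib]
  apply Finset.sum_congr rfl
  intro ℓ hℓ
  rw [Tseq_eq_sum]
  have h1 : ∀ t ∈ Finset.range ℓ,
      q.getD t 0 * v.getD ℓ 0 / 2 ^ (ℓ + 1 - t)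
        = (q.getD t 0 / 2 ^ (ℓ - t)) * v.getD ℓ 0 / 2 := by
    intro t ht
    have ht' : t < ℓ := Finset.mem_range.mp ht
    have : ℓ + 1 - t = (ℓ - t) + 1 := by omega
    rw [this, pow_succ]
    ring
  rw [Finset.sum_congr rfl h1]
  rw [show (∑ t ∈ Finset.range ℓ, (q.getD t 0 / 2 ^ (ℓ - t)) * v.getD ℓ 0 / 2)
      = (∑ t ∈ Finset.range ℓ, q.getD t 0 / 2 ^ (ℓ - t)) * v.getD ℓ 0 / 2 by
    simp [Finset.sum_div, Finset.sum_mul]]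
  ring
end
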